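/- arXiv:0804.0725 — 12 statements merged into one kernel-verified Lean document; each statement's English description precedes it below -/
import Mathlib

section
/- Let q(x,y) = ax² + bxy + cy² be a primitive integral binary quadratic form with a ≠ 0 and discriminant d = b² − 4ac > 0 not a perfect square, with even Gram matrix G = !![2a, b; b, 2c]. Let (U,V) be the minimal positive solution of x² − dy² = 4 and u = !![(U − bV)/2, −cV; aV, (U + bV)/2]. Then the set of proper automorphs of q, i.e. matrices M ∈ GL₂(ℤ) with det M = 1 and Mᵀ G M = G, is exactly { ε·u^k : ε ∈ {1,−1}, k ∈ ℤ }, and this representation is unique: ε·u^k = ε'·u^(k') implies ε = ε' and k = k' (so the group of proper automorphs is isomorphic to ℤ/2ℤ × ℤ). -/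
open Matrix

def Qm (a b c p n : ℤ) : Matrix (Fin 2) (Fin 2) ℤ := !![p, -(c*n); a*n, p + b*n]

lemma Qm_mul (a b c p n p' n' : ℤ) :
    Qm a b c p n * Qm a b c p' n' =
      Qm a b c (p*p' - a*c*(n*n')) (p*n' + p'*n + b*(n*n')) := by
  ext i j
  fin_cases i <;> fin_cases j <;>
    simp [Qm, Matrix.mul_apply, Fin.sum_univ_two] <;> ring

lemma Qm_one (a b c : ℤ) : Qm a b c 1 0 = 1 := by
  ext i j; fin_cases i <;> fin_cases j <;> simp [Qm, Matrix.one_apply]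

lemma Qm_det (a b c p n : ℤ) : (Qm a b c p n).det = p^2 + b*(p*n) + a*c*n^2 := by
  simp [Qm, Matrix.det_fin_two_of]; ring

lemma Qm_inv_cancel (a b c p n : ℤ) (h : p^2 + b*(p*n) + a*c*n^2 = 1) :
    Qm a b c p n * Qm a b c (p + b*n) (-n) = 1 := by
  rw [Qm_mul, show p*(p+b*n) - a*c*(n*(-n)) = 1 from by linear_combination h,
      show p*(-n) + (p+b*n)*n + b*(n*(-n)) = 0 from by ring, Qm_one]

lemma Qm_inv_cancel' (a b c p n : ℤ) (h : p^2 + b*(p*n) + a*c*n^2 = 1) :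
    Qm a b c (p + b*n) (-n) * Qm a b c p n = 1 := by
  rw [Qm_mul, show (p+b*n)*p - a*c*((-n)*n) = 1 from by linear_combination h,
      show (p+b*n)*n + p*(-n) + b*((-n)*n) = 0 from by ring, Qm_one]

lemma Qm_automorph (a b c p n : ℤ) (h : p^2 + b*(p*n) + a*c*n^2 = 1) :
    (Qm a b c p n)ᵀ * !![2*a, b; b, 2*c] * Qm a b c p n = !![2*a, b; b, 2*c] := by
  have hT : (Qm a b c p n)ᵀ = !![p, a*n; -(c*n), p + b*n] := by
    ext i j; fin_cases i <;> fin_cases j <;> simp [Qm]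
  rw [hT]
  ext i j
  fin_cases i <;> fin_cases j <;>
    simp [Qm, Matrix.mul_apply, Fin.sum_univ_two, Matrix.transpose_apply]
  · linear_combination (2*a)*h
  · linear_combination b*h
  · linear_combination b*h
  · linear_combination (2*c)*h

lemma Qm_neg (a b c p n : ℤ) : Qm a b c (-p) (-n) = -Qm a b c p n := by
  ext i j; fin_cases i <;> fin_cases j <;> simp [Qm] <;> ring

set_option maxHeartbeats 2000000 in
theorem proper_automorphs_of_nonsquare_disc
    (a b c : ℤ) (ha : a ≠ 0) (hprim : Int.gcd a (Int.gcd b c) = 1)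
    (d : ℤ) (hd : d = b ^ 2 - 4 * a * c) (hdpos : 0 < d)
    (hdsq : ¬ ∃ m : ℤ, m * m = d)
    (U V : ℤ) (hU : 0 < U) (hV : 0 < V) (hUV : U ^ 2 - d * V ^ 2 = 4)
    (hmin : ∀ x y : ℤ, 0 < x → 0 < y → x ^ 2 - d * y ^ 2 = 4 → U ≤ x)
    (G : Matrix (Fin 2) (Fin 2) ℤ) (hG : G = !![2 * a, b; b, 2 * c])
    (u : Matrix.GeneralLinearGroup (Fin 2) ℤ)
    (hu : (u : Matrix (Fin 2) (Fin 2) ℤ) =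
      !![(U - b * V) / 2, -c * V; a * V, (U + b * V) / 2]) :
    (∀ M : Matrix (Fin 2) (Fin 2) ℤ,
      (M.det = 1 ∧ Mᵀ * G * M = G) ↔
        ∃ ε : ℤ, (ε = 1 ∨ ε = -1) ∧ ∃ k : ℤ,
          M = ε • ((u ^ k : Matrix.GeneralLinearGroup (Fin 2) ℤ) : Matrix (Fin 2) (Fin 2) ℤ)) ∧
    (∀ ε ε' : ℤ, ∀ k k' : ℤ, (ε = 1 ∨ ε = -1) → (ε' = 1 ∨ ε' = -1) →
      ε • ((u ^ k : Matrix.GeneralLinearGroup (Fin 2) ℤ) : Matrix (Fin 2) (Fin 2) ℤ) =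
        ε' • ((u ^ k' : Matrix.GeneralLinearGroup (Fin 2) ℤ) : Matrix (Fin 2) (Fin 2) ℤ) →
      ε = ε' ∧ k = k') := by
  clear hdsq
  -- parity of U - b*V
  have hevsq : Even (U^2 - (b*V)^2) := by
    refine ⟨2 - 2*(a*c*V^2) - ?_, ?_⟩
    · exact 0
    · linear_combination hUV + V^2 * hd
  have hevsq2 : Even (U^2) ↔ Even ((b*V)^2) := Int.even_sub.mp hevsq
  have hev : Even (U - b*V) := by
    rw [Int.even_sub]
    rw [Int.even_pow' two_ne_zero, Int.even_pow' two_ne_zero] at hevsq2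
    exact hevsq2
  obtain ⟨p₀, hp0'⟩ := hev
  have hp₀ : U = 2*p₀ + b*V := by linarith
  have hu' : (u : Matrix (Fin 2) (Fin 2) ℤ) = Qm a b c p₀ V := by
    have hdiv1 : (U - b*V)/2 = p₀ := by
      rw [show U - b*V = 2*p₀ by linarith]
      exact Int.mul_ediv_cancel_left _ two_ne_zero
    have hdiv2 : (U + b*V)/2 = p₀ + b*V := by
      rw [show U + b*V = 2*(p₀ + b*V) by linarith]
      exact Int.mul_ediv_cancel_left _ two_ne_zero
    rw [hu, hdiv1, hdiv2]
    ext i j; fin_cases i <;> fin_cases j <;> simp [Qm] <;> ring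
  have hdeq₀ : p₀^2 + b*(p₀*V) + a*c*V^2 = 1 := by
    have h4 : 4*(p₀^2 + b*(p₀*V) + a*c*V^2) = 4*1 := by
      linear_combination hUV + V^2*hd - (U + 2*p₀ + b*V)*hp₀
    exact mul_left_cancel₀ (by norm_num : (4:ℤ) ≠ 0) h4
  have hU3 : 3 ≤ U := by nlinarith [hUV, mul_pos hdpos (pow_pos hV 2), hU]
  -- powers with natural exponent
  have pow_nat : ∀ k : ℕ, ∃ p n : ℤ,
      ((u^k : Matrix.GeneralLinearGroup (Fin 2) ℤ) : Matrix (Fin 2) (Fin 2) ℤ) = Qm a b c p n ∧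
      p^2 + b*(p*n) + a*c*n^2 = 1 ∧ 0 < 2*p + b*n ∧ 0 ≤ n ∧
      (k ≠ 0 → V ≤ n) ∧ (k = 0 → n = 0) := by
    intro k
    induction k with
    | zero =>
      refine ⟨1, 0, ?_, by norm_num, by norm_num, le_refl 0, fun h => absurd rfl h, fun _ => rfl⟩
      rw [pow_zero, Units.val_one, Qm_one]
    | succ k ih =>
      obtain ⟨p, n, hQ, hdeq, ht, hn0, hnV, -⟩ := ih
      have hteq : (2*p + b*n)^2 - d*n^2 = 4 := by linear_combination 4*hdeq - n^2*hd
      have ht2 : 2 ≤ 2*p + b*n := by nlinarith [mul_nonneg hdpos.le (sq_nonneg n)]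
      have h2N : 2*(p*V + p₀*n + b*(n*V)) = (2*p+b*n)*V + U*n := by rw [hp₀]; ring
      have hNV : V ≤ p*V + p₀*n + b*(n*V) := by
        have h1 : 2*V ≤ (2*p+b*n)*V := by
          have := mul_le_mul_of_nonneg_right ht2 hV.le
          linarith
        have h2 : 0 ≤ U*n := mul_nonneg hU.le hn0
        linarith
      refine ⟨p*p₀ - a*c*(n*V), p*V + p₀*n + b*(n*V), ?_, ?_, ?_, by linarith, fun _ => hNV,
        fun h => absurd h (Nat.succ_ne_zero k)⟩
      · rw [pow_succ, Units.val_mul, hQ, hu', Qm_mul]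
      · linear_combination (p₀^2 + b*(p₀*V) + a*c*V^2)*hdeq + hdeq₀
      · have h2 : 2*(2*(p*p₀ - a*c*(n*V)) + b*(p*V + p₀*n + b*(n*V))) = (2*p+b*n)*U + d*(n*V) := by
          rw [hp₀, hd]; ring
        have h3 : 0 < (2*p+b*n)*U := mul_pos (by linarith) hU
        have h4 : 0 ≤ d*(n*V) := mul_nonneg hdpos.le (mul_nonneg hn0 hV.le)
        linarith
  -- powers with integer exponent
  have pow_int : ∀ k : ℤ, ∃ p n : ℤ,
      ((u^k : Matrix.GeneralLinearGroup (Fin 2) ℤ) : Matrix (Fin 2) (Fin 2) ℤ) = Qm a b c p n ∧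
      p^2 + b*(p*n) + a*c*n^2 = 1 ∧ 0 < 2*p + b*n ∧
      (0 < k → V ≤ n) ∧ (k = 0 → n = 0) ∧ (k < 0 → n ≤ -V) := by
    intro k
    rcases Int.eq_nat_or_neg k with ⟨m, rfl | rfl⟩
    · obtain ⟨p, n, hQ, hdeq, ht, hn0, hnV, hn00⟩ := pow_nat m
      refine ⟨p, n, by rw [zpow_natCast]; exact hQ, hdeq, ht, ?_, ?_, ?_⟩
      · intro hk; exact hnV (by exact_mod_cast hk.ne')
      · intro hk; exact hn00 (by exact_mod_cast hk)
      · intro hk; exact absurd hk (by omega)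
    · obtain ⟨p, n, hQ, hdeq, ht, hn0, hnV, hn00⟩ := pow_nat m
      have hQinv : ((u^(-(m:ℤ)) : Matrix.GeneralLinearGroup (Fin 2) ℤ) : Matrix (Fin 2) (Fin 2) ℤ)
          = Qm a b c (p + b*n) (-n) := by
        have h1 : (u^(-(m:ℤ)) : Matrix.GeneralLinearGroup (Fin 2) ℤ) = (u^m)⁻¹ := by
          rw [_root_.zpow_neg u (m:ℤ), zpow_natCast]
        rw [h1, Matrix.coe_units_inv, hQ,
          Matrix.inv_eq_right_inv (Qm_inv_cancel a b c p n hdeq)]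
      refine ⟨p + b*n, -n, hQinv, by linear_combination hdeq, by linarith, ?_, ?_, ?_⟩
      · intro hk; exact absurd hk (by omega)
      · intro hk
        have hm : m = 0 := by omega
        rw [hn00 hm]; ring
      · intro hk
        have hm : m ≠ 0 := by omega
        linarith [hnV hm]
  -- descent: positive solutions are nonneg powers of u
  have descent : ∀ N : ℕ, ∀ p n : ℤ, n.natAbs = N → 0 ≤ n →
      p^2 + b*(p*n) + a*c*n^2 = 1 → 0 < 2*p + b*n →
      ∃ k : ℕ, Qm a b c p n = ((u^k : Matrix.GeneralLinearGroup (Fin 2) ℤ) : Matrix (Fin 2) (Fin 2) ℤ) := by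
    intro N
    induction N using Nat.strong_induction_on with
    | _ N ih =>
      intro p n hN hn hdeq ht
      have hteq : (2*p + b*n)^2 - d*n^2 = 4 := by linear_combination 4*hdeq - n^2*hd
      rcases hn.eq_or_lt with h0 | hpos
      · have hn0 : n = 0 := h0.symm
        subst hn0
        have hp1 : p = 1 := by nlinarith [hdeq, ht]
        refine ⟨0, ?_⟩
        rw [hp1, pow_zero, Units.val_one, Qm_one]
      · have hUt : U ≤ 2*p + b*n := hmin _ n ht hpos hteq
        have hdV : d*V^2 ≤ d*n^2 := by linarith [mul_self_le_mul_self hU.le hUt, hUV, hteq]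
        have hVn : V ≤ n := by
          by_contra hc
          push_neg at hc
          have h1 : n^2 < V^2 := by linarith [mul_self_lt_mul_self hpos.le hc]
          have h2 : d*n^2 < d*V^2 := mul_lt_mul_of_pos_left h1 hdpos
          linarith
        -- the reduced solution
        have hdeqi : (p₀ + b*V)^2 + b*((p₀ + b*V)*(-V)) + a*c*(-V)^2 = 1 := by
          linear_combination hdeq₀
        have hprod : Qm a b c p n * Qm a b c (p₀ + b*V) (-V)
            = Qm a b c (p*p₀ + b*(p*V) + a*c*(n*V)) (p₀*n - p*V) := by
          rw [Qm_mul]; congr 1 <;> ring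
        have hdeqP : (p*p₀ + b*(p*V) + a*c*(n*V))^2 + b*((p*p₀ + b*(p*V) + a*c*(n*V))*(p₀*n - p*V))
            + a*c*(p₀*n - p*V)^2 = 1 := by
          linear_combination (p^2 + b*(p*n) + a*c*n^2)*hdeqi + hdeq
        have h2t : 2*(2*(p*p₀ + b*(p*V) + a*c*(n*V)) + b*(p₀*n - p*V))
            = (2*p+b*n)*U - d*(n*V) := by rw [hp₀, hd]; ring
        have e1 : ((2*p+b*n)*U)^2 = (d*(n*V))^2 + 4*(d*n^2 + d*V^2 + 4) := by
          linear_combination U^2*hteq + (d*n^2+4)*hUV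
        have htP : 0 < 2*(p*p₀ + b*(p*V) + a*c*(n*V)) + b*(p₀*n - p*V) := by
          by_contra hc
          push_neg at hc
          have h3 : (2*p+b*n)*U ≤ d*(n*V) := by linarith
          have h4 : 0 < (2*p+b*n)*U := mul_pos ht hU
          have h5 : ((2*p+b*n)*U)^2 ≤ (d*(n*V))^2 := by
            linarith [mul_self_le_mul_self h4.le h3]
          linarith [e1, mul_nonneg hdpos.le (sq_nonneg n), mul_nonneg hdpos.le (sq_nonneg V)]
        have h2N : 2*(p₀*n - p*V) = U*n - (2*p+b*n)*V := by rw [hp₀]; ring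
        have e2 : (U*n)^2 = ((2*p+b*n)*V)^2 + 4*(n^2 - V^2) := by
          linear_combination n^2*hUV - V^2*hteq
        have hVV : V^2 ≤ n^2 := by linarith [mul_self_le_mul_self hV.le hVn]
        have hN0 : 0 ≤ p₀*n - p*V := by
          by_contra hc
          push_neg at hc
          have h3 : U*n < (2*p+b*n)*V := by linarith
          have h4 : 0 < U*n := mul_pos hU hpos
          have h5 : (U*n)^2 < ((2*p+b*n)*V)^2 := by
            linarith [mul_self_lt_mul_self h4.le h3]
          linarith
        have hNlt : p₀*n - p*V < n := by
          by_contra hc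
          push_neg at hc
          have h3 : (2*p+b*n)*V ≤ n*(U-2) := by linarith [h2N, hc]
          have h4 : 0 < (2*p+b*n)*V := mul_pos ht hV
          have h5 : ((2*p+b*n)*V)^2 ≤ (n*(U-2))^2 := by
            linarith [mul_self_le_mul_self h4.le h3]
          have e3 : ((2*p+b*n)*V)^2 = (n*(U-2))^2 + 4*V^2 + n^2*(4*U - 8) := by
            linear_combination V^2*hteq - n^2*hUV
          have h6 : 0 < n^2*(4*U - 8) := mul_pos (pow_pos hpos 2) (by linarith)
          linarith [sq_nonneg V]
        have hNa : (p₀*n - p*V).natAbs < N := by omega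
        obtain ⟨k, hk⟩ := ih _ hNa (p*p₀ + b*(p*V) + a*c*(n*V)) (p₀*n - p*V) rfl hN0 hdeqP htP
        refine ⟨k + 1, ?_⟩
        have hstep : Qm a b c p n
            = Qm a b c (p*p₀ + b*(p*V) + a*c*(n*V)) (p₀*n - p*V) * Qm a b c p₀ V := by
          calc Qm a b c p n = Qm a b c p n * 1 := (mul_one _).symm
            _ = Qm a b c p n * (Qm a b c (p₀ + b*V) (-V) * Qm a b c p₀ V) := by
                rw [Qm_inv_cancel' a b c p₀ V hdeq₀]
            _ = (Qm a b c p n * Qm a b c (p₀ + b*V) (-V)) * Qm a b c p₀ V := by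
                rw [mul_assoc]
            _ = _ := by rw [hprod]
        rw [hstep, hk, ← hu', pow_succ, Units.val_mul]
  -- every positive-trace solution is a power of u
  have main : ∀ p n : ℤ, p^2 + b*(p*n) + a*c*n^2 = 1 → 0 < 2*p + b*n →
      ∃ k : ℤ, Qm a b c p n = ((u^k : Matrix.GeneralLinearGroup (Fin 2) ℤ) : Matrix (Fin 2) (Fin 2) ℤ) := by
    intro p n hdeq ht
    rcases le_or_gt 0 n with hn | hn
    · obtain ⟨k, hk⟩ := descent n.natAbs p n rfl hn hdeq ht
      exact ⟨(k:ℤ), by rw [zpow_natCast]; exact hk⟩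
    · obtain ⟨k, hk⟩ := descent (-n).natAbs (p + b*n) (-n) rfl (by linarith)
        (by linear_combination hdeq) (by linarith)
      refine ⟨-(k:ℤ), ?_⟩
      have h1 : ((u^(-(k:ℤ)) : Matrix.GeneralLinearGroup (Fin 2) ℤ) : Matrix (Fin 2) (Fin 2) ℤ)
          = (((u^(k:ℤ) : Matrix.GeneralLinearGroup (Fin 2) ℤ) : Matrix (Fin 2) (Fin 2) ℤ))⁻¹ := by
        rw [_root_.zpow_neg u (k:ℤ), Matrix.coe_units_inv]
      rw [h1, zpow_natCast, ← hk]
      exact (Matrix.inv_eq_left_inv (Qm_inv_cancel a b c p n hdeq)).symm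
  constructor
  · intro M
    constructor
    · rintro ⟨hdet, haut⟩
      obtain ⟨p, q, r, s, hM⟩ : ∃ p q r s, M = !![p,q;r,s] :=
        ⟨M 0 0, M 0 1, M 1 0, M 1 1, Matrix.eta_fin_two M⟩
      subst hM
      rw [hG] at haut
      rw [Matrix.det_fin_two_of] at hdet
      -- G*M = adj(Mᵀ)*G
      have hA : (!![p,q;r,s]ᵀ).adjugate * !![p,q;r,s]ᵀ = 1 := by
        rw [Matrix.adjugate_mul, Matrix.det_transpose, Matrix.det_fin_two_of, hdet, one_smul]
      have haut2 : !![p,q;r,s]ᵀ * (!![2*a,b;b,2*c] * !![p,q;r,s]) = !![2*a,b;b,2*c] := by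
        rw [← mul_assoc]; exact haut
      have hGM : !![2*a,b;b,2*c] * !![p,q;r,s] = (!![p,q;r,s]ᵀ).adjugate * !![2*a,b;b,2*c] := by
        calc !![2*a,b;b,2*c] * !![p,q;r,s]
            = ((!![p,q;r,s]ᵀ).adjugate * !![p,q;r,s]ᵀ) * (!![2*a,b;b,2*c] * !![p,q;r,s]) := by
              rw [hA, one_mul]
          _ = (!![p,q;r,s]ᵀ).adjugate * (!![p,q;r,s]ᵀ * (!![2*a,b;b,2*c] * !![p,q;r,s])) := by
              rw [mul_assoc]
          _ = _ := by rw [haut2]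
      have hadj : (!![p,q;r,s]ᵀ).adjugate = !![s, -r; -q, p] := by
        rw [show (!![p,q;r,s])ᵀ = !![p,r;q,s] from by
          ext i j; fin_cases i <;> fin_cases j <;> simp]
        rw [Matrix.adjugate_fin_two]
        ext i j; fin_cases i <;> fin_cases j <;> simp
      rw [hadj] at hGM
      have he : ∀ i j, (!![2*a,b;b,2*c] * !![p,q;r,s]) i j
          = (!![s,-r;-q,p] * !![2*a,b;b,2*c]) i j := fun i j => by rw [hGM]
      have e00 := he 0 0
      have e01 := he 0 1
      simp [Matrix.mul_apply, Fin.sum_univ_two] at e00 e01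
      have hasp : a*(s - p) = b*r := by linarith
      have haq : a*q = -(c*r) := by linarith
      -- primitivity gives a ∣ r
      have hbez1 := Int.gcd_eq_gcd_ab b c
      have hbez2 := Int.gcd_eq_gcd_ab a ((Int.gcd b c : ℕ) : ℤ)
      rw [show Int.gcd a ((Int.gcd b c : ℕ) : ℤ) = 1 from hprim] at hbez2
      set x : ℤ := Int.gcdA a ((Int.gcd b c : ℕ) : ℤ) with hx
      set y : ℤ := Int.gcdB a ((Int.gcd b c : ℕ) : ℤ) with hy
      set xb : ℤ := Int.gcdA b c with hxb
      set yc : ℤ := Int.gcdB b c with hyc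
      have hone : (1:ℤ) = a * x + (b * xb + c * yc) * y := by
        rw [← hbez1]; exact_mod_cast hbez2
      have hr : r = a * (r*x + (s-p)*(xb*y) + (-q)*(yc*y)) := by
        linear_combination r*hone - (xb*y)*hasp + (yc*y)*haq
      set n : ℤ := r*x + (s-p)*(xb*y) + (-q)*(yc*y) with hn
      have hq : q = -(c*n) := by
        apply mul_left_cancel₀ ha
        linear_combination haq - c*hr
      have hs : s = p + b*n := by
        apply mul_left_cancel₀ ha
        linear_combination hasp + b*hr
      have hMQ : !![p,q;r,s] = Qm a b c p n := by
        rw [hq, hs, hr]; rfl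
      have hdeqM : p^2 + b*(p*n) + a*c*n^2 = 1 := by
        rw [hq, hs, hr] at hdet
        linear_combination hdet
      have hteq : (2*p + b*n)^2 - d*n^2 = 4 := by linear_combination 4*hdeqM - n^2*hd
      have ht0 : 2*p + b*n ≠ 0 := by
        intro h
        rw [h] at hteq
        have : 0 ≤ d*n^2 := mul_nonneg hdpos.le (sq_nonneg n)
        nlinarith [hteq]
      rcases lt_or_gt_of_ne ht0 with hneg | hpost
      · obtain ⟨k, hk⟩ := main (-p) (-n) (by linear_combination hdeqM) (by linarith)
        refine ⟨-1, Or.inr rfl, k, ?_⟩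
        have h2 : Qm a b c p n = -Qm a b c (-p) (-n) := by rw [Qm_neg, neg_neg]
        rw [hMQ, h2, hk, neg_one_smul]
      · obtain ⟨k, hk⟩ := main p n hdeqM hpost
        exact ⟨1, Or.inl rfl, k, by rw [hMQ, hk, one_smul]⟩
    · rintro ⟨ε, hε, k, rfl⟩
      obtain ⟨p, n, hQ, hdeq, -, -, -, -⟩ := pow_int k
      constructor
      · rcases hε with rfl | rfl
        · rw [one_smul, hQ, Qm_det]; exact hdeq
        · rw [neg_one_smul]
          rw [Matrix.det_neg]
          rw [hQ, Qm_det]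
          simpa using hdeq
      · rw [hG]
        rcases hε with rfl | rfl
        · rw [one_smul, hQ]; exact Qm_automorph a b c p n hdeq
        · rw [neg_one_smul]
          simp only [Matrix.transpose_neg, Matrix.neg_mul, Matrix.mul_neg, neg_neg]
          rw [hQ]
          exact Qm_automorph a b c p n hdeq
  · intro ε ε' k k' hε hε' heq
    obtain ⟨p, n, hQ, hdeq, ht, hposk, hzero, hnegk⟩ := pow_int k
    obtain ⟨p', n', hQ', hdeq', ht', hposk', hzero', hnegk'⟩ := pow_int k'
    rw [hQ, hQ'] at heq
    have hij : ∀ i j, (ε • Qm a b c p n) i j = (ε' • Qm a b c p' n') i j :=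
      fun i j => by rw [heq]
    have h00 := hij 0 0
    have h10 := hij 1 0
    have h11 := hij 1 1
    simp [Qm, Matrix.smul_apply, smul_eq_mul] at h00 h10 h11
    have hee : ε = ε' := by
      rcases hε with rfl | rfl <;> rcases hε' with rfl | rfl
      · rfl
      · exfalso; simp at h00 h11; linarith
      · exfalso; simp at h00 h11; linarith
      · rfl
    subst hee
    have heps : ε ≠ 0 := by rcases hε with rfl | rfl <;> norm_num
    refine ⟨rfl, ?_⟩
    have hp : p = p' := mul_left_cancel₀ heps h00
    have hnn : n = n' := mul_left_cancel₀ ha (mul_left_cancel₀ heps h10)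
    have huk : (u^k) = (u^k') := Units.ext (by rw [hQ, hQ', hp, hnn])
    by_contra hkk
    have h1 : u^(k - k') = 1 := by
      rw [_root_.zpow_sub u k k', huk]
      exact mul_inv_cancel (u^k')
    obtain ⟨pp, nn, hQ1, -, -, hpos1, -, hneg1⟩ := pow_int (k - k')
    rw [h1] at hQ1
    have hent : ((1 : Matrix.GeneralLinearGroup (Fin 2) ℤ) : Matrix (Fin 2) (Fin 2) ℤ) 1 0
        = Qm a b c pp nn 1 0 := by rw [hQ1]
    have hnn0 : nn = 0 := by
      simp [Qm, Units.val_one, Matrix.one_apply] at hent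
      rcases hent with h | h
      · exact absurd h ha
      · exact h
    have hne : k - k' ≠ 0 := sub_ne_zero.mpr hkk
    rcases lt_or_gt_of_ne hne with hlt | hgt
    · linarith [hneg1 hlt]
    · linarith [hpos1 hgt]
end

section
/- Let q(x,y) = ax² + bxy + cy² be a primitive integral binary quadratic form with a ≠ 0 whose discriminant d = b² − 4ac is a positive perfect square, with even Gram matrix G = !![2a, b; b, 2c]. Then the only matrices M ∈ GL₂(ℤ) with det M = 1 and Mᵀ G M = G are M = I and M = −I. -/
open Matrix

private lemma nat_aux (T X : ℕ) (h : T * T = X * X + 4) : X = 0 := by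
  rcases lt_trichotomy T (X + 1) with h1 | h1 | h1
  · exfalso; nlinarith
  · subst h1
    have h2 : 2 * X + 1 = 4 := by nlinarith
    omega
  · nlinarith

private lemma int_aux (t x : ℤ) (h : t * t - x * x = 4) : x = 0 := by
  have hnat : (t.natAbs : ℤ) * t.natAbs = (x.natAbs : ℤ) * x.natAbs + 4 := by
    rw [Int.natAbs_mul_self', Int.natAbs_mul_self']; linarith
  have := nat_aux t.natAbs x.natAbs (by exact_mod_cast hnat)
  omega

/-- if the discriminant is a positive perfect square, the only
proper automorphs are `±I`. -/
theorem proper_automorphs_of_square_disc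
    (a b c : ℤ) (ha : a ≠ 0) (hprim : Int.gcd a (Int.gcd b c) = 1)
    (hdpos : 0 < b ^ 2 - 4 * a * c)
    (hdsq : ∃ m : ℤ, m * m = b ^ 2 - 4 * a * c)
    (G : Matrix (Fin 2) (Fin 2) ℤ) (hG : G = !![2 * a, b; b, 2 * c])
    (M : Matrix (Fin 2) (Fin 2) ℤ) (hdet : M.det = 1)
    (hM : Mᵀ * G * M = G) :
    M = 1 ∨ M = -1 := by
  subst hG
  obtain ⟨p, q, r, s, rfl⟩ : ∃ p q r s, M = !![p, q; r, s] :=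
    ⟨M 0 0, M 0 1, M 1 0, M 1 1, by ext i j; fin_cases i <;> fin_cases j <;> rfl⟩
  have e4 : p * s - q * r = 1 := by
    rw [Matrix.det_fin_two_of] at hdet; linarith
  have h00 := congrFun (congrFun hM 0) 0
  have h01 := congrFun (congrFun hM 0) 1
  have h11 := congrFun (congrFun hM 1) 1
  simp [Matrix.mul_apply, Fin.sum_univ_succ, Matrix.transpose_apply] at h00 h01 h11
  -- doubled fundamental equations
  have F1 : 2*(a*p^2 + b*p*r + c*r^2) = 2*a := by linear_combination h00
  have F2 : 2*(a*p*q + b*q*r + c*r*s) = 0 := by linear_combination h01 - b * e4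
  have F3 : 2*(a*q^2 + b*q*s + c*s^2) = 2*c := by linear_combination h11
  -- key linear relations
  have g1 : a*s - a*p - b*r = 0 := by
    have h2 : 2*(a*s - a*p - b*r) = 0 := by
      linear_combination (-s) * F1 + r * F2 + (2*(a*p + b*r)) * e4
    linarith
  have g2 : a*q + c*r = 0 := by
    have h2 : 2*(a*q + c*r) = 0 := by
      linear_combination p * F2 - q * F1 - (2*c*r) * e4
    linarith
  have g3 : c*s - c*p + b*q = 0 := by
    have h2 : 2*(c*s - c*p + b*q) = 0 := by
      linear_combination p * F3 - q * F2 - (2*(b*q + c*s)) * e4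
    linarith
  -- Bezout coefficients
  have hbc := Int.gcd_eq_gcd_ab b c
  have habc := Int.gcd_eq_gcd_ab a (Int.gcd b c)
  rw [hprim] at habc
  set α := Int.gcdA a (Int.gcd b c) with hα
  set δ := Int.gcdB a (Int.gcd b c) with hδ
  set β := δ * Int.gcdA b c with hβ
  set γ := δ * Int.gcdB b c with hγ
  have hbez : α * a + β * b + γ * c = 1 := by
    have : (1 : ℤ) = a * α + (Int.gcd b c : ℤ) * δ := by exact_mod_cast habc
    rw [hbc] at this
    rw [hβ, hγ]; linarith [this]; 
  set u : ℤ := α * r + β * (s - p) - γ * q with hu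
  have hau : a * u = r := by
    rw [hu]; linear_combination β * g1 - γ * g2 + r * hbez
  have hbu : b * u = s - p := by
    rw [hu]; linear_combination (-α) * g1 + (-γ) * g3 + (s - p) * hbez
  have hcu : c * u = -q := by
    rw [hu]; linear_combination α * g2 + β * g3 + (-q) * hbez
  -- Pell equation
  obtain ⟨m, hm⟩ := hdsq
  have hpell : (p + s) * (p + s) - (m * u) * (m * u) = 4 := by
    linear_combination 4 * e4 - (b*u + s - p) * hbu + (4*c*u) * hau + (4*r) * hcu - u^2 * hm
  have hmu : m * u = 0 := int_aux _ _ hpell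
  have hm0 : m ≠ 0 := by
    intro h; rw [h] at hm; simp at hm; omega
  have hu0 : u = 0 := by
    rcases mul_eq_zero.mp hmu with h | h
    · exact absurd h hm0
    · exact h
  rw [hu0] at hau hbu hcu
  have hr : r = 0 := by linarith
  have hq : q = 0 := by linarith
  have hsp : s = p := by linarith
  rw [hq, hr, hsp] at e4
  have : p * p = 1 := by linarith
  rcases Int.eq_one_or_neg_one_of_mul_eq_one' this with ⟨h1, _⟩ | ⟨h1, _⟩
  · left
    rw [hq, hr, hsp, h1, Matrix.one_fin_two]
  · right
    rw [hq, hr, hsp, h1]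
    ext i j
    fin_cases i <;> fin_cases j <;> simp [Matrix.one_fin_two]
end

section
/- Let q(x,y) = ax² + bxy + cy² be a primitive integral binary quadratic form with discriminant d = b² − 4ac > 0 and even Gram matrix G = !![2a, b; b, 2c]. If q is ambiguous, i.e. there exists M ∈ GL₂(ℤ) with det M = −1 and Mᵀ G M = G, then q is properly equivalent to a form with middle coefficient 0 or to a form whose first two coefficients are equal: there exist P ∈ SL₂(ℤ) and integers a', c' such that Pᵀ G P = !![2a', 0; 0, 2c'] or Pᵀ G P = !![2a', a'; a', 2c']. -/
/-!
An automorph `M` of determinant `-1` of a nondegenerate form has trace `0`, so `det (M - 1) = 0`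
and `M` fixes a primitive vector. Completing it to a basis of `ℤ²` conjugates `M` in `SL₂(ℤ)` to
`!![1, n; 0, -1]`, and a further transvection replaces `n` by `n mod 2 = m`. In that basis the
form has an even Gram matrix `!![2a', e; e, 2c']` fixed by `!![1, m; 0, -1]`, which forces
`e = m a'`.
-/

open Matrix

theorem Int.exists_isCoprime_smul_eq {v : Fin 2 → ℤ} (hv : v ≠ 0) :
    ∃ g : ℤ, g ≠ 0 ∧ ∃ w : Fin 2 → ℤ, IsCoprime (w 0) (w 1) ∧ v = g • w := by
  have hgcd : 0 < Int.gcd (v 0) (v 1) := by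
    refine Int.gcd_pos_iff.mpr ?_
    by_contra! h
    exact hv (by ext i; fin_cases i <;> simp [h.1, h.2])
  obtain ⟨g, x, y, hg, hxy, hx, hy⟩ := Int.exists_gcd_one' hgcd
  refine ⟨g, by positivity, ![x, y], Int.isCoprime_iff_gcd_eq_one.mpr hxy, ?_⟩
  ext i; fin_cases i <;> simp [hx, hy, mul_comm]

namespace Matrix

variable {R : Type*} [CommRing R]

theorem trace_adjugate_fin_two (M : Matrix (Fin 2) (Fin 2) R) :
    M.adjugate.trace = M.trace := by
  simp [adjugate_fin_two, trace_fin_two, add_comm]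

theorem det_sub_one_fin_two (M : Matrix (Fin 2) (Fin 2) R) :
    (M - 1).det = M.det - M.trace + 1 := by
  simp only [det_fin_two, trace_fin_two, Matrix.sub_apply, one_apply_eq, one_apply_ne, ne_eq,
    zero_ne_one, one_ne_zero, not_false_eq_true, sub_zero]
  ring

/-- `G` conjugates `Mᵀ` to `M⁻¹ = -adj M`, and `tr (adj M) = tr M` for `2 × 2` matrices. -/
theorem trace_eq_zero_of_transpose_mul_mul_eq_self [NoZeroDivisors R]
    [NeZero (2 : R)] {G M : Matrix (Fin 2) (Fin 2) R} (hG : G.det ≠ 0) (hdet : M.det = -1)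
    (hM : Mᵀ * G * M = G) : M.trace = 0 := by
  have hconj : -(G.det • Mᵀ) = G * M.adjugate * G.adjugate := by
    have h := congrArg (· * M.adjugate * G.adjugate) hM
    simp only [Matrix.mul_assoc, mul_adjugate, hdet] at h
    rw [Matrix.mul_assoc G, ← h]
    simp [mul_adjugate]
  have htrace : -(G.det * M.trace) = G.det * M.trace := by
    have h := congrArg trace hconj
    rwa [trace_neg, trace_smul, trace_transpose, trace_mul_cycle, adjugate_mul, smul_mul, one_mul,
      trace_smul, trace_adjugate_fin_two, smul_eq_mul] at h
  have h2 : (2 * G.det) * M.trace = 0 := by linear_combination -htrace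
  exact (mul_eq_zero.mp h2).resolve_left (mul_ne_zero two_ne_zero hG)

theorem exists_isCoprime_mulVec_eq_self {M : Matrix (Fin 2) (Fin 2) ℤ} (htr : M.trace = 0)
    (hdet : M.det = -1) : ∃ w : Fin 2 → ℤ, IsCoprime (w 0) (w 1) ∧ M *ᵥ w = w := by
  obtain ⟨v, hv, hMv⟩ : ∃ v ≠ 0, (M - 1) *ᵥ v = 0 :=
    exists_mulVec_eq_zero_iff.mpr (by rw [det_sub_one_fin_two, htr, hdet]; ring)
  obtain ⟨g, hg, w, hw, rfl⟩ := Int.exists_isCoprime_smul_eq hv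
  refine ⟨w, hw, ?_⟩
  rw [sub_mulVec, one_mulVec, sub_eq_zero, mulVec_smul] at hMv
  exact smul_right_injective _ hg hMv

theorem exists_det_eq_one_col_eq {w : Fin 2 → ℤ} (hw : IsCoprime (w 0) (w 1)) :
    ∃ P : Matrix (Fin 2) (Fin 2) ℤ, P.det = 1 ∧ P.col 0 = w := by
  obtain ⟨u, v, huv⟩ := hw
  refine ⟨!![w 0, -v; w 1, u], by rw [det_fin_two_of]; linear_combination huv, ?_⟩
  ext i; fin_cases i <;> rfl

theorem mul_eq_mul_of_mulVec_col_eq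
    {M P : Matrix (Fin 2) (Fin 2) R} (hP : P.det = 1) (htr : M.trace = 0)
    (hfix : M *ᵥ P.col 0 = P.col 0) :
    M * P = P * !![1, (P.adjugate * M * P) 0 1; 0, -1] := by
  set N := P.adjugate * M * P with hN
  have hPN : P * N = M * P := by
    rw [hN, ← Matrix.mul_assoc, ← Matrix.mul_assoc, mul_adjugate, hP, one_smul, Matrix.one_mul]
  have hcol : N.col 0 = Pi.single 0 1 := by
    rw [← mulVec_single_one, hN, ← mulVec_mulVec, ← mulVec_mulVec, mulVec_single_one, hfix,
      ← mulVec_single_one, mulVec_mulVec, adjugate_mul, hP, one_smul, one_mulVec]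
  have h00 : N 0 0 = 1 := by simpa using congrFun hcol 0
  have h10 : N 1 0 = 0 := by simpa using congrFun hcol 1
  have h11 : N 1 1 = -1 := by
    have : N.trace = 0 := by
      rw [hN, trace_mul_cycle, mul_adjugate, hP, one_smul, Matrix.one_mul, htr]
    rw [trace_fin_two, h00] at this
    linear_combination this
  rw [← hPN]
  conv_lhs => rw [eta_fin_two N, h00, h10, h11]

theorem reflection_mul_transvection (n k : ℤ) :
    !![1, n; 0, -1] * !![1, k; 0, 1] = !![1, k; 0, 1] * !![(1 : ℤ), n + 2 * k; 0, -1] := by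
  rw [mul_fin_two, mul_fin_two]
  ring_nf

theorem exists_det_eq_one_mul_eq_mul_of_trace_eq_zero {M : Matrix (Fin 2) (Fin 2) ℤ}
    (htr : M.trace = 0) (hdet : M.det = -1) :
    ∃ P : Matrix (Fin 2) (Fin 2) ℤ, P.det = 1 ∧
      ∃ m : ℤ, (m = 0 ∨ m = 1) ∧ M * P = P * !![1, m; 0, -1] := by
  obtain ⟨w, hw, hMw⟩ := exists_isCoprime_mulVec_eq_self htr hdet
  obtain ⟨P, hP, rfl⟩ := exists_det_eq_one_col_eq hw
  have hMP := mul_eq_mul_of_mulVec_col_eq hP htr hMw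
  generalize (P.adjugate * M * P) 0 1 = n at hMP
  refine ⟨P * !![1, -(n / 2); 0, 1], by simp [hP], n % 2, Int.emod_two_eq_zero_or_one n, ?_⟩
  rw [← Matrix.mul_assoc, hMP, Matrix.mul_assoc, reflection_mul_transvection, ← Matrix.mul_assoc,
    show n + 2 * -(n / 2) = n % 2 by omega]

theorem exists_transpose_mul_evenGram_mul (a b c : R)
    (P : Matrix (Fin 2) (Fin 2) R) : ∃ a' e c' : R,
      Pᵀ * !![2 * a, b; b, 2 * c] * P = !![2 * a', e; e, 2 * c'] := by
  refine ⟨a * P 0 0 ^ 2 + b * P 0 0 * P 1 0 + c * P 1 0 ^ 2,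
    2 * a * P 0 0 * P 0 1 + b * (P 0 0 * P 1 1 + P 1 0 * P 0 1) + 2 * c * P 1 0 * P 1 1,
    a * P 0 1 ^ 2 + b * P 0 1 * P 1 1 + c * P 1 1 ^ 2, ?_⟩
  ext i j
  fin_cases i <;> fin_cases j <;> simp [mul_apply, Fin.sum_univ_two] <;> ring

theorem transpose_mul_mul_eq_of_mul_eq_mul {n S : Type*} [Fintype n] [CommSemiring S]
    {G M P N : Matrix n n S} (hM : Mᵀ * G * M = G) (hMP : M * P = P * N) :
    Nᵀ * (Pᵀ * G * P) * N = Pᵀ * G * P := by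
  calc Nᵀ * (Pᵀ * G * P) * N = (M * P)ᵀ * G * (M * P) := by
        simp only [hMP, transpose_mul, Matrix.mul_assoc]
    _ = Pᵀ * (Mᵀ * G * M) * P := by simp only [transpose_mul, Matrix.mul_assoc]
    _ = Pᵀ * G * P := by rw [hM]

theorem eq_mul_of_transpose_mul_mul_eq [NoZeroDivisors R]
    [NeZero (2 : R)] {a e c m : R}
    (h : (!![1, m; 0, -1])ᵀ * !![2 * a, e; e, 2 * c] * !![1, m; 0, -1] = !![2 * a, e; e, 2 * c]) :
    e = m * a := by
  have h01 := congrFun (congrFun h 0) 1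
  simp only [mul_apply, transpose_apply, of_apply, cons_val', cons_val_zero, cons_val_one,
    cons_val_fin_one, Fin.sum_univ_two, one_mul, zero_mul, add_zero, mul_neg, mul_one] at h01
  have h2 : 2 * (e - m * a) = 0 := by linear_combination -h01
  exact sub_eq_zero.mp ((mul_eq_zero.mp h2).resolve_left two_ne_zero)

end Matrix

theorem ambiguous_form_properly_equivalent_to_special_form_general
    (a b c : ℤ)
    (hdpos : 0 < b ^ 2 - 4 * a * c)
    (G : Matrix (Fin 2) (Fin 2) ℤ) (hG : G = !![2 * a, b; b, 2 * c])
    (M : Matrix (Fin 2) (Fin 2) ℤ) (hdet : M.det = -1)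
    (hM : Mᵀ * G * M = G) :
    ∃ P : Matrix (Fin 2) (Fin 2) ℤ, P.det = 1 ∧ ∃ a' c' : ℤ,
      Pᵀ * G * P = !![2 * a', 0; 0, 2 * c'] ∨
      Pᵀ * G * P = !![2 * a', a'; a', 2 * c'] := by
  have hGdet : G.det ≠ 0 := by rw [hG, det_fin_two_of]; linarith
  obtain ⟨P, hP, m, hm, hMP⟩ := exists_det_eq_one_mul_eq_mul_of_trace_eq_zero
    (trace_eq_zero_of_transpose_mul_mul_eq_self hGdet hdet hM) hdet
  obtain ⟨a', e, c', hG'⟩ := exists_transpose_mul_evenGram_mul a b c P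
  rw [← hG] at hG'
  have he : e = m * a' := by
    apply eq_mul_of_transpose_mul_mul_eq (c := c')
    rw [← hG']
    exact transpose_mul_mul_eq_of_mul_eq_mul hM hMP
  refine ⟨P, hP, a', c', ?_⟩
  rw [hG', he]
  rcases hm with rfl | rfl
  · left; simp
  · right; simp

/-- an ambiguous form is properly equivalent to a diagonal form or
to a form whose first two coefficients coincide. -/
theorem ambiguous_form_properly_equivalent_to_special_form
    (a b c : ℤ) (hprim : Int.gcd a (Int.gcd b c) = 1)
    (hdpos : 0 < b ^ 2 - 4 * a * c)
    (G : Matrix (Fin 2) (Fin 2) ℤ) (hG : G = !![2 * a, b; b, 2 * c])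
    (M : Matrix (Fin 2) (Fin 2) ℤ) (hdet : M.det = -1)
    (hM : Mᵀ * G * M = G) :
    ∃ P : Matrix (Fin 2) (Fin 2) ℤ, P.det = 1 ∧ ∃ a' c' : ℤ,
      Pᵀ * G * P = !![2 * a', 0; 0, 2 * c'] ∨
      Pᵀ * G * P = !![2 * a', a'; a', 2 * c'] :=
  ambiguous_form_properly_equivalent_to_special_form_general a b c hdpos G hG M hdet hM
end

section
/- Let q be either the diagonal form d_{[a,c]} = ax² + cy² with a > 0 > c (and set w = 0), or the form d̃_{[a,c]} = ax² + axy + cy² with a > 0 and a > 4c (and set w = 1); let G be its even Gram matrix and d > 0 its discriminant. Then the involution a' = !![1, w; 0, −1] satisfies det a' = −1 and (a')ᵀ G a' = G, and a' maps each connected component of the light cone {v ∈ ℝ² : vᵀ G v > 0} onto itself. If moreover q is primitive and d is not a perfect square, then the set of automorphs of q mapping a fixed component C onto itself is exactly { u^k : k ∈ ℤ } ∪ { a'·u^k : k ∈ ℤ }. -/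
/-!
For `a > 0` and `d = b² - 4ac > 0` the light cone is `{√d |y| < |2ax + by|}`, the union of the
open convex cone `F = {√d |y| < 2ax + by}` and `-F`; these are its two components. An automorph
`g` is a linear homeomorphism preserving the cone, so it permutes `{F, -F}`, and it fixes each
component exactly when `g (1, 0) ∈ F`, i.e. `2a g₀₀ + b g₁₀ > 0`. The involution `a'` fixes
`(1, 0)`, so it preserves both components.

For a primitive form, the relation `G M = adj(M)ᵀ G` (valid when `det M = 1`) forces an automorph
of determinant one to be `!![m, -cv; av, m + bv]`, with `(2m + bv, v)` a solution of
`t² - dv² = 4`; it preserves `F` iff `t > 0`. Multiplying by `u⁻¹` sends such a solution with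
`v > 0` to one with `0 ≤ v' < v` (minimality of `(U, V)`), so by descent it is a power of `u`.
Finally `a' M` has determinant one whenever `det M = -1`.
-/

open Matrix Set
open scoped Pointwise

namespace Matrix

variable {n R : Type*} [Fintype n] [CommRing R]

def lightCone (G : Matrix n n ℤ) : Set (n → ℝ) :=
  {v | 0 < v ⬝ᵥ (G.map (Int.cast : ℤ → ℝ) *ᵥ v)}

theorem map_intCast_mul (M N : Matrix n n ℤ) :
    (M * N).map (Int.cast : ℤ → R) = M.map Int.cast * N.map Int.cast :=
  Matrix.map_mul (f := Int.castRingHom R)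

theorem dotProduct_mulVec_mulVec_of_transpose_mul_mul_eq {G M : Matrix n n ℤ}
    (h : Mᵀ * G * M = G) (v : n → R) :
    (M.map Int.cast *ᵥ v) ⬝ᵥ (G.map Int.cast *ᵥ (M.map Int.cast *ᵥ v)) =
      v ⬝ᵥ (G.map (Int.cast : ℤ → R) *ᵥ v) := by
  have h' : (Mᵀ * G * M).map (Int.cast : ℤ → R) = G.map Int.cast := by rw [h]
  rw [map_intCast_mul, map_intCast_mul, transpose_map] at h'
  conv_rhs => rw [← h', ← mulVec_mulVec, ← mulVec_mulVec, dotProduct_mulVec, vecMul_transpose]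

theorem preimage_lightCone {G M : Matrix n n ℤ} (h : Mᵀ * G * M = G) :
    (M.map (Int.cast : ℤ → ℝ) *ᵥ ·) ⁻¹' G.lightCone = G.lightCone := by
  ext v
  simp only [lightCone, mem_preimage, mem_ofPred_eq,
    dotProduct_mulVec_mulVec_of_transpose_mul_mul_eq h]

theorem transpose_mul_mul_mul_eq {G M N : Matrix n n R} (hM : Mᵀ * G * M = G)
    (hN : Nᵀ * G * N = G) : (M * N)ᵀ * G * (M * N) = G :=
  calc (M * N)ᵀ * G * (M * N) = Nᵀ * (Mᵀ * G * M) * N := by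
        simp only [transpose_mul, Matrix.mul_assoc]
    _ = G := by rw [hM, hN]

variable [DecidableEq n]

theorem transpose_mul_mul_eq_of_mul_eq_one {G M N : Matrix n n R} (hM : Mᵀ * G * M = G)
    (hMN : M * N = 1) : Nᵀ * G * N = G :=
  calc Nᵀ * G * N = Nᵀ * (Mᵀ * G * M) * N := by rw [hM]
    _ = (M * N)ᵀ * G * (M * N) := by simp only [transpose_mul, Matrix.mul_assoc]
    _ = G := by simp [hMN]

namespace GeneralLinearGroup

def toRealHomeomorph (g : GL n ℤ) : (n → ℝ) ≃ₜ (n → ℝ) where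
  toFun v := (g : Matrix n n ℤ).map Int.cast *ᵥ v
  invFun v := ((g⁻¹ : GL n ℤ) : Matrix n n ℤ).map Int.cast *ᵥ v
  left_inv v := by
    dsimp only
    rw [mulVec_mulVec, ← map_intCast_mul]
    simp
  right_inv v := by
    dsimp only
    rw [mulVec_mulVec, ← map_intCast_mul]
    simp
  continuous_toFun := by fun_prop
  continuous_invFun := by fun_prop

theorem coe_toRealHomeomorph (g : GL n ℤ) :
    ⇑g.toRealHomeomorph = ((g : Matrix n n ℤ).map (Int.cast : ℤ → ℝ) *ᵥ ·) := rfl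

theorem toRealHomeomorph_mul (g h : GL n ℤ) :
    ⇑(g * h).toRealHomeomorph = g.toRealHomeomorph ∘ h.toRealHomeomorph := by
  ext1 v
  simp [coe_toRealHomeomorph, map_intCast_mul, mulVec_mulVec]

theorem image_lightCone {G : Matrix n n ℤ} (g : GL n ℤ) (hg : (g : Matrix n n ℤ)ᵀ * G * g = G) :
    g.toRealHomeomorph '' G.lightCone = G.lightCone := by
  conv_lhs => rw [← preimage_lightCone hg]
  exact g.toRealHomeomorph.image_preimage _

theorem det_eq_one_or_neg_one (g : GL n ℤ) :
    (g : Matrix n n ℤ).det = 1 ∨ (g : Matrix n n ℤ).det = -1 :=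
  Int.isUnit_iff.mp ((isUnit_iff_isUnit_det _).mp g.isUnit)

end GeneralLinearGroup

def automorphStabilizer (G : Matrix n n ℤ) (C : Set (n → ℝ)) : Subgroup (GL n ℤ) where
  carrier := {g | (g : Matrix n n ℤ)ᵀ * G * g = G ∧ g.toRealHomeomorph '' C = C}
  mul_mem' := by
    rintro g h ⟨hg, hgC⟩ ⟨hh, hhC⟩
    refine ⟨transpose_mul_mul_mul_eq hg hh, ?_⟩
    rw [GeneralLinearGroup.toRealHomeomorph_mul, image_comp, hhC, hgC]
  one_mem' := ⟨by simp, by simp [GeneralLinearGroup.coe_toRealHomeomorph]⟩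
  inv_mem' := by
    rintro g ⟨hg, hgC⟩
    refine ⟨transpose_mul_mul_eq_of_mul_eq_one hg g.mul_inv, ?_⟩
    show g.toRealHomeomorph.symm '' C = C
    conv_lhs => rw [← hgC]
    exact g.toRealHomeomorph.symm_image_image C

theorem exists_mem_automorphStabilizer_iff {G M : Matrix n n ℤ} {C : Set (n → ℝ)} :
    (∃ g ∈ automorphStabilizer G C, (g : Matrix n n ℤ) = M) ↔
      (M.det = 1 ∨ M.det = -1) ∧ Mᵀ * G * M = G ∧ (M.map (Int.cast : ℤ → ℝ) *ᵥ ·) '' C = C := by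
  constructor
  · rintro ⟨g, ⟨hg, hgC⟩, rfl⟩
    exact ⟨g.det_eq_one_or_neg_one, hg, hgC⟩
  · rintro ⟨hdet, hM, hMC⟩
    have hunit : IsUnit M.det := by rcases hdet with h | h <;> simp [h]
    exact ⟨nonsingInvUnit M hunit, ⟨hM, hMC⟩, rfl⟩

end Matrix

theorem connectedComponentIn_union_eq_left {X : Type*} [TopologicalSpace X] {U V : Set X}
    (hU : IsOpen U) (hV : IsOpen V) (hUV : Disjoint U V) (hU' : IsPreconnected U) {x : X}
    (hx : x ∈ U) : connectedComponentIn (U ∪ V) x = U :=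
  (isPreconnected_connectedComponentIn.subset_left_of_subset_union hU hV hUV
      (connectedComponentIn_subset _ _) ⟨x, mem_connectedComponentIn (Or.inl hx), hx⟩).antisymm
    (hU'.subset_connectedComponentIn hx subset_union_left)

def IsLeastPellSolution (d U V : ℤ) : Prop :=
  0 < U ∧ 0 < V ∧ U ^ 2 - d * V ^ 2 = 4 ∧
    ∀ x y : ℤ, 0 < x → 0 < y → x ^ 2 - d * y ^ 2 = 4 → U ≤ x

/-- With `ε = (U + V√d)/2` and `η = (t + v√d)/2`, the quotient `η / ε` is `(t' + v'√d)/2` where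
`2t' = tU - dvV` and `2v' = vU - tV`. -/
theorem IsLeastPellSolution.descent {d U V t v : ℤ} (hUV : IsLeastPellSolution d U V)
    (hd : 0 < d) (ht : t ^ 2 - d * v ^ 2 = 4) (ht0 : 0 < t) (hv : 0 < v) :
    0 ≤ v * U - t * V ∧ v * U - t * V < 2 * v ∧ 0 < t * U - d * v * V := by
  obtain ⟨hU0, hV, hU, hmin⟩ := hUV
  have hVv : V ^ 2 ≤ v ^ 2 := by
    have : U ^ 2 ≤ t ^ 2 := pow_le_pow_left₀ hU0.le (hmin t v ht0 hv ht) 2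
    exact le_of_mul_le_mul_left (by linarith) hd
  have hU2 : 2 < U := by nlinarith
  refine ⟨?_, ?_, ?_⟩
  · have h : (v * U) ^ 2 - (t * V) ^ 2 = 4 * (v ^ 2 - V ^ 2) := by
      linear_combination v ^ 2 * hU - V ^ 2 * ht
    have := le_of_pow_le_pow_left₀ two_ne_zero (by positivity)
      (by linarith : (t * V) ^ 2 ≤ (v * U) ^ 2)
    linarith
  · have h : (t * V) ^ 2 - (v * (U - 2)) ^ 2 = 4 * V ^ 2 + (4 * U - 8) * v ^ 2 := by
      linear_combination V ^ 2 * ht - v ^ 2 * hU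
    have := lt_of_pow_lt_pow_left₀ 2 (by positivity)
      (by nlinarith : (v * (U - 2)) ^ 2 < (t * V) ^ 2)
    linarith
  · have h : (t * U) ^ 2 - (d * v * V) ^ 2 = 16 + 4 * d * v ^ 2 + 4 * d * V ^ 2 := by
      linear_combination U ^ 2 * ht + (d * v ^ 2 + 4) * hU
    have := lt_of_pow_lt_pow_left₀ 2 (by positivity)
      (by nlinarith : (d * v * V) ^ 2 < (t * U) ^ 2)
    linarith

theorem Int.dvd_of_dvd_mul_of_dvd_mul {a b c g : ℤ} (hprim : Int.gcd a (Int.gcd b c) = 1)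
    (hb : a ∣ b * g) (hc : a ∣ c * g) : a ∣ g := by
  have hcop : IsCoprime a (Int.gcd b c) := Int.isCoprime_iff_gcd_eq_one.mpr hprim
  refine hcop.dvd_of_dvd_mul_left ?_
  rw [Int.gcd_eq_gcd_ab b c, add_mul, mul_right_comm, mul_right_comm c]
  exact dvd_add (hb.mul_right _) (hc.mul_right _)

section BinaryForm

variable {a b c : ℤ}

local notation "𝔾" => !![2 * a, b; b, 2 * c]

/-- For `a > 0` and `b² - 4ac ≥ 0`, the component containing `(1, 0)` of the light cone of
`ax² + bxy + cy²`; the other component is its negative. -/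
def futureCone (a b c : ℤ) : Set (Fin 2 → ℝ) :=
  {v | √((b ^ 2 - 4 * a * c : ℤ) : ℝ) * |v 1| < 2 * a * v 0 + b * v 1}

theorem isOpen_futureCone : IsOpen (futureCone a b c) :=
  isOpen_lt (by fun_prop) (by fun_prop)

theorem convex_futureCone : Convex ℝ (futureCone a b c) := by
  intro x hx y hy s t hs ht hst
  simp only [futureCone, mem_ofPred_eq, Pi.add_apply, Pi.smul_apply, smul_eq_mul] at *
  have habs : |s * x 1 + t * y 1| ≤ s * |x 1| + t * |y 1| := by
    simpa [abs_mul, abs_of_nonneg hs, abs_of_nonneg ht] using abs_add_le (s * x 1) (t * y 1)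
  have hsqrt := Real.sqrt_nonneg ((b ^ 2 - 4 * a * c : ℤ) : ℝ)
  rcases hs.eq_or_lt with rfl | hs
  · simp_all
  · nlinarith [mul_le_mul_of_nonneg_left habs hsqrt]

theorem pos_of_mem_futureCone {v : Fin 2 → ℝ} (hv : v ∈ futureCone a b c) :
    0 < 2 * a * v 0 + b * v 1 :=
  lt_of_le_of_lt (by positivity) hv

theorem disjoint_futureCone_neg : Disjoint (futureCone a b c) (-futureCone a b c) :=
  disjoint_left.mpr fun v hv hv' => by
    have h1 := pos_of_mem_futureCone hv
    have h2 := pos_of_mem_futureCone (mem_neg.mp hv')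
    simp only [Pi.neg_apply] at h2
    linarith

theorem mem_lightCone_iff (ha : 0 < a) {v : Fin 2 → ℝ} :
    v ∈ lightCone 𝔾 ↔
      ((b ^ 2 - 4 * a * c : ℤ) : ℝ) * v 1 ^ 2 < (2 * a * v 0 + b * v 1) ^ 2 := by
  have ha' : (0 : ℝ) < a := by exact_mod_cast ha
  simp only [lightCone, mem_ofPred_eq, mulVec, dotProduct, Fin.sum_univ_two, map_apply, of_apply,
    cons_val', cons_val_zero, cons_val_one, empty_val', cons_val_fin_one, Int.cast_mul,
    Int.cast_ofNat, Int.cast_sub, Int.cast_pow]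
  constructor <;> intro h <;> nlinarith

theorem lightCone_eq_union (ha : 0 < a) (hd : 0 ≤ b ^ 2 - 4 * a * c) :
    lightCone 𝔾 = futureCone a b c ∪ -futureCone a b c := by
  have hd' : (0 : ℝ) ≤ ((b ^ 2 - 4 * a * c : ℤ) : ℝ) := by exact_mod_cast hd
  ext v
  rw [mem_lightCone_iff ha, ← Real.sq_sqrt hd', ← sq_abs (v 1), ← mul_pow, sq_lt_sq,
    abs_of_nonneg (by positivity), lt_abs]
  simp only [futureCone, mem_union, mem_neg, mem_ofPred_eq, Pi.neg_apply, abs_neg]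
  constructor <;> rintro (h | h) <;> [left; right; left; right] <;> linarith

theorem mem_futureCone_of_pos (ha : 0 < a) (hd : 0 ≤ b ^ 2 - 4 * a * c) {v : Fin 2 → ℝ}
    (hv : v ∈ lightCone 𝔾) (hpos : 0 < 2 * a * v 0 + b * v 1) :
    v ∈ futureCone a b c := by
  rw [lightCone_eq_union ha hd] at hv
  refine hv.resolve_right fun hneg => ?_
  have := pos_of_mem_futureCone (mem_neg.mp hneg)
  simp only [Pi.neg_apply] at this
  linarith

theorem connectedComponentIn_lightCone_of_mem_futureCone (ha : 0 < a)
    (hd : 0 ≤ b ^ 2 - 4 * a * c) {v : Fin 2 → ℝ} (hv : v ∈ futureCone a b c) :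
    connectedComponentIn (lightCone 𝔾) v = futureCone a b c := by
  rw [lightCone_eq_union ha hd]
  exact connectedComponentIn_union_eq_left isOpen_futureCone isOpen_futureCone.neg
    disjoint_futureCone_neg convex_futureCone.isPreconnected hv

theorem connectedComponentIn_lightCone_eq_or (ha : 0 < a) (hd : 0 ≤ b ^ 2 - 4 * a * c)
    {v : Fin 2 → ℝ} (hv : v ∈ lightCone 𝔾) :
    connectedComponentIn (lightCone 𝔾) v = futureCone a b c ∨
      connectedComponentIn (lightCone 𝔾) v = -futureCone a b c := by
  rw [lightCone_eq_union ha hd] at hv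
  rcases hv with hv | hv
  · exact Or.inl (connectedComponentIn_lightCone_of_mem_futureCone ha hd hv)
  · rw [lightCone_eq_union ha hd, union_comm]
    exact Or.inr (connectedComponentIn_union_eq_left isOpen_futureCone.neg isOpen_futureCone
      disjoint_futureCone_neg.symm convex_futureCone.neg.isPreconnected hv)

theorem image_futureCone_eq_self_iff (ha : 0 < a) (hd : 0 ≤ b ^ 2 - 4 * a * c)
    {g : GL (Fin 2) ℤ} (hg : (g : Matrix (Fin 2) (Fin 2) ℤ)ᵀ * 𝔾 * g = 𝔾) :
    g.toRealHomeomorph '' futureCone a b c = futureCone a b c ↔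
      0 < 2 * a * (g : Matrix (Fin 2) (Fin 2) ℤ) 0 0 + b * (g : Matrix (Fin 2) (Fin 2) ℤ) 1 0 := by
  set e : Fin 2 → ℝ := Pi.single 0 1
  have he : e ∈ futureCone a b c := by simp [futureCone, e, ha]
  have heLC : e ∈ lightCone 𝔾 := by
    rw [lightCone_eq_union ha hd]; exact Or.inl he
  have hge : g.toRealHomeomorph e ∈ lightCone 𝔾 :=
    g.image_lightCone hg ▸ mem_image_of_mem _ heLC
  have himg : g.toRealHomeomorph '' futureCone a b c =
      connectedComponentIn (lightCone 𝔾) (g.toRealHomeomorph e) := by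
    rw [← connectedComponentIn_lightCone_of_mem_futureCone ha hd he,
      g.toRealHomeomorph.image_connectedComponentIn heLC, g.image_lightCone hg]
  set M : Matrix (Fin 2) (Fin 2) ℤ := ↑g
  have hL : 2 * a * g.toRealHomeomorph e 0 + b * g.toRealHomeomorph e 1 =
      ((2 * a * M 0 0 + b * M 1 0 : ℤ) : ℝ) := by
    simp [e, GeneralLinearGroup.coe_toRealHomeomorph, M]
  rw [himg, ← Int.cast_pos (R := ℝ), ← hL]
  constructor
  · intro h
    exact pos_of_mem_futureCone (h ▸ mem_connectedComponentIn hge)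
  · intro h
    exact connectedComponentIn_lightCone_of_mem_futureCone ha hd (mem_futureCone_of_pos ha hd hge h)

theorem image_connectedComponentIn_lightCone_eq_self_iff (ha : 0 < a)
    (hd : 0 ≤ b ^ 2 - 4 * a * c) {g : GL (Fin 2) ℤ}
    (hg : (g : Matrix (Fin 2) (Fin 2) ℤ)ᵀ * 𝔾 * g = 𝔾)
    {v : Fin 2 → ℝ} (hv : v ∈ lightCone 𝔾) :
    g.toRealHomeomorph '' connectedComponentIn (lightCone 𝔾) v =
        connectedComponentIn (lightCone 𝔾) v ↔
      0 < 2 * a * (g : Matrix (Fin 2) (Fin 2) ℤ) 0 0 + b * (g : Matrix (Fin 2) (Fin 2) ℤ) 1 0 := by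
  rw [← image_futureCone_eq_self_iff ha hd hg]
  rcases connectedComponentIn_lightCone_eq_or ha hd hv with h | h <;> rw [h]
  rw [image_neg_of_apply_neg_eq_neg (f := g.toRealHomeomorph) (g := g.toRealHomeomorph)
    fun x _ => mulVec_neg x _, neg_inj]

/-- The automorph attached to the solution `(2m + bv, v)` of `t² - (b² - 4ac)v² = 4`; the matrix
`u` of the statement is `pellAutomorph a b c ((U - bV)/2) V`. -/
def pellAutomorph (a b c m v : ℤ) : Matrix (Fin 2) (Fin 2) ℤ :=
  !![m, -c * v; a * v, m + b * v]

theorem pellAutomorph_mul (m v m' v' : ℤ) :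
    pellAutomorph a b c m v * pellAutomorph a b c m' v' =
      pellAutomorph a b c (m * m' - a * c * v * v') (m * v' + m' * v + b * v * v') := by
  ext i j
  fin_cases i <;> fin_cases j <;> simp [pellAutomorph, mul_apply] <;> ring

theorem pellAutomorph_one_zero : pellAutomorph a b c 1 0 = 1 := by
  simp [pellAutomorph, one_fin_two]

theorem det_pellAutomorph (m v : ℤ) :
    (pellAutomorph a b c m v).det = m ^ 2 + b * m * v + a * c * v ^ 2 := by
  rw [pellAutomorph, det_fin_two_of]
  ring

theorem adjugate_pellAutomorph (m v : ℤ) :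
    adjugate (pellAutomorph a b c m v) = pellAutomorph a b c (m + b * v) (-v) := by
  simp [pellAutomorph, adjugate_fin_two_of]

theorem pellAutomorph_mul_pellAutomorph_neg {m v : ℤ} (h : (pellAutomorph a b c m v).det = 1) :
    pellAutomorph a b c m v * pellAutomorph a b c (m + b * v) (-v) = 1 := by
  rw [← adjugate_pellAutomorph, mul_adjugate, h, one_smul]

theorem det_pellAutomorph_eq_one_iff {m v : ℤ} :
    (pellAutomorph a b c m v).det = 1 ↔ (2 * m + b * v) ^ 2 - (b ^ 2 - 4 * a * c) * v ^ 2 = 4 := by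
  rw [det_pellAutomorph]
  constructor <;> intro h
  · linear_combination 4 * h
  · have h4 : 4 * (m ^ 2 + b * m * v + a * c * v ^ 2) = 4 * 1 := by linear_combination h
    exact mul_left_cancel₀ four_ne_zero h4

theorem transpose_mul_mul_pellAutomorph {m v : ℤ} (h : (pellAutomorph a b c m v).det = 1) :
    (pellAutomorph a b c m v)ᵀ * 𝔾 * pellAutomorph a b c m v = 𝔾 := by
  rw [det_pellAutomorph] at h
  ext i j
  fin_cases i <;> fin_cases j <;> simp [pellAutomorph, mul_apply] <;>
    first
      | linear_combination (2 * a) * h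
      | linear_combination b * h
      | linear_combination (2 * c) * h

theorem exists_eq_pellAutomorph (ha : a ≠ 0) (hprim : Int.gcd a (Int.gcd b c) = 1)
    {M : Matrix (Fin 2) (Fin 2) ℤ} (hM : Mᵀ * 𝔾 * M = 𝔾) (hdet : M.det = 1) :
    ∃ m v, M = pellAutomorph a b c m v := by
  -- unlike `Mᵀ 𝔾 M = 𝔾`, this is linear in the entries of `M`
  have key : 𝔾 * M = (adjugate M)ᵀ * 𝔾 :=
    calc 𝔾 * M = (adjugate Mᵀ * Mᵀ) * (𝔾 * M) := by
          rw [adjugate_mul, det_transpose, hdet, one_smul, Matrix.one_mul]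
      _ = adjugate Mᵀ * 𝔾 := by
          conv_rhs => rw [← hM]
          simp only [Matrix.mul_assoc]
      _ = (adjugate M)ᵀ * 𝔾 := by rw [adjugate_transpose]
  obtain ⟨m, n, g, h, rfl⟩ : ∃ m n g h, M = !![m, n; g, h] := ⟨_, _, _, _, eta_fin_two M⟩
  have k00 := congrFun (congrFun key 0) 0
  have k01 := congrFun (congrFun key 0) 1
  simp only [mul_apply, Fin.sum_univ_two, transpose_apply, adjugate_fin_two_of, of_apply, cons_val',
    cons_val_zero, cons_val_one, cons_val_fin_one, neg_mul] at k00 k01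
  obtain ⟨v, rfl⟩ : a ∣ g :=
    Int.dvd_of_dvd_mul_of_dvd_mul hprim ⟨h - m, by linarith⟩ ⟨-n, by linarith⟩
  refine ⟨m, v, ?_⟩
  have hn : n = -c * v := mul_left_cancel₀ ha (by linarith)
  have hh : h = m + b * v := mul_left_cancel₀ ha (by linarith)
  rw [pellAutomorph, hn, hh]

theorem exists_pow_eq_pellAutomorph {P V : ℤ} (hd : 0 < b ^ 2 - 4 * a * c)
    (hPV : IsLeastPellSolution (b ^ 2 - 4 * a * c) (2 * P + b * V) V)
    {m v : ℤ} (hv : 0 ≤ v) (hdet : (pellAutomorph a b c m v).det = 1) (ht : 0 < 2 * m + b * v) :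
    ∃ k : ℕ, pellAutomorph a b c m v = pellAutomorph a b c P V ^ k := by
  have hu := det_pellAutomorph_eq_one_iff.mpr hPV.2.2.1
  induction hn : v.toNat using Nat.strong_induction_on generalizing m v with
  | _ n ih =>
  rcases hv.eq_or_lt with rfl | hv
  · refine ⟨0, ?_⟩
    rw [det_pellAutomorph] at hdet
    obtain rfl : m = 1 := by nlinarith
    exact pellAutomorph_one_zero
  · -- `pellAutomorph a b c (P + b * V) (-V)` is the inverse of `u = pellAutomorph a b c P V`
    have hprod := pellAutomorph_mul (a := a) (b := b) (c := c) (P + b * V) (-V) m v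
    set m' := (P + b * V) * m - a * c * -V * v
    set v' := (P + b * V) * v + m * -V + b * -V * v
    have h2v' : 2 * v' = v * (2 * P + b * V) - (2 * m + b * v) * V := by ring
    have h2t' : 2 * (2 * m' + b * v') =
        (2 * m + b * v) * (2 * P + b * V) - (b ^ 2 - 4 * a * c) * v * V := by ring
    have hdet' : (pellAutomorph a b c m' v').det = 1 := by
      rw [← hprod, det_mul, hdet, ← adjugate_pellAutomorph, det_adjugate, hu]
      simp
    obtain ⟨hv0, hvv, ht'⟩ := hPV.descent hd (det_pellAutomorph_eq_one_iff.mp hdet) ht hv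
    obtain ⟨k, hk⟩ := ih _ (by omega) (by linarith) hdet' (by linarith) rfl
    refine ⟨k + 1, ?_⟩
    rw [pow_succ', ← hk, ← hprod, ← Matrix.mul_assoc, pellAutomorph_mul_pellAutomorph_neg hu,
      Matrix.one_mul]

theorem exists_zpow_eq_pellAutomorph {P V : ℤ} (hd : 0 < b ^ 2 - 4 * a * c)
    (hPV : IsLeastPellSolution (b ^ 2 - 4 * a * c) (2 * P + b * V) V)
    {u : GL (Fin 2) ℤ} (hu : (u : Matrix (Fin 2) (Fin 2) ℤ) = pellAutomorph a b c P V)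
    {m v : ℤ} (hdet : (pellAutomorph a b c m v).det = 1) (ht : 0 < 2 * m + b * v) :
    ∃ k : ℤ, pellAutomorph a b c m v = ((u ^ k : GL (Fin 2) ℤ) : Matrix (Fin 2) (Fin 2) ℤ) := by
  rcases le_or_gt 0 v with hv | hv
  · obtain ⟨k, hk⟩ := exists_pow_eq_pellAutomorph hd hPV hv hdet ht
    exact ⟨k, by rw [hk, zpow_natCast, Units.val_pow_eq_pow_val, hu]⟩
  · have hdet' : (pellAutomorph a b c (m + b * v) (-v)).det = 1 := by
      rw [← adjugate_pellAutomorph, det_adjugate, hdet]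
      simp
    obtain ⟨k, hk⟩ := exists_pow_eq_pellAutomorph hd hPV (by linarith) hdet' (by linarith)
    refine ⟨-k, left_inv_eq_right_inv (pellAutomorph_mul_pellAutomorph_neg hdet) ?_⟩
    rw [hk, ← hu, ← Units.val_pow_eq_pow_val, ← Units.val_mul, _root_.zpow_neg, zpow_natCast,
      mul_inv_cancel, Units.val_one]

variable {P V : ℤ} {w : Fin 2 → ℝ} {u : GL (Fin 2) ℤ}

theorem eq_zpow_of_mem_automorphStabilizer (ha : 0 < a) (hd : 0 < b ^ 2 - 4 * a * c)
    (hprim : Int.gcd a (Int.gcd b c) = 1) (hw : w ∈ lightCone 𝔾)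
    (hPV : IsLeastPellSolution (b ^ 2 - 4 * a * c) (2 * P + b * V) V)
    (hu : (u : Matrix (Fin 2) (Fin 2) ℤ) = pellAutomorph a b c P V) {g : GL (Fin 2) ℤ}
    (hg : g ∈ automorphStabilizer 𝔾 (connectedComponentIn (lightCone 𝔾) w))
    (hdet : (g : Matrix (Fin 2) (Fin 2) ℤ).det = 1) : ∃ k : ℤ, g = u ^ k := by
  obtain ⟨hgG, hgC⟩ := hg
  have hpos := (image_connectedComponentIn_lightCone_eq_self_iff ha hd.le hgG hw).mp hgC
  obtain ⟨m, v, hmv⟩ := exists_eq_pellAutomorph ha.ne' hprim hgG hdet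
  rw [hmv] at hdet hpos
  have ht : 0 < 2 * m + b * v := by
    simp only [pellAutomorph, of_apply, cons_val', cons_val_zero, cons_val_one, empty_val',
      cons_val_fin_one] at hpos
    nlinarith
  obtain ⟨k, hk⟩ := exists_zpow_eq_pellAutomorph hd hPV hu hdet ht
  exact ⟨k, Units.ext (hmv.trans hk)⟩

theorem mem_automorphStabilizer_iff_exists_zpow (ha : 0 < a) (hd : 0 < b ^ 2 - 4 * a * c)
    (hprim : Int.gcd a (Int.gcd b c) = 1) (hw : w ∈ lightCone 𝔾)
    (hPV : IsLeastPellSolution (b ^ 2 - 4 * a * c) (2 * P + b * V) V)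
    (hu : (u : Matrix (Fin 2) (Fin 2) ℤ) = pellAutomorph a b c P V) {α : GL (Fin 2) ℤ}
    (hα : α ∈ automorphStabilizer 𝔾 (connectedComponentIn (lightCone 𝔾) w))
    (hαdet : (α : Matrix (Fin 2) (Fin 2) ℤ).det = -1) (hα2 : α * α = 1) {g : GL (Fin 2) ℤ} :
    g ∈ automorphStabilizer 𝔾 (connectedComponentIn (lightCone 𝔾) w) ↔
      ∃ k : ℤ, g = u ^ k ∨ g = α * u ^ k := by
  have huG := hu ▸ transpose_mul_mul_pellAutomorph (det_pellAutomorph_eq_one_iff.mpr hPV.2.2.1)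
  have huS : u ∈ automorphStabilizer 𝔾 (connectedComponentIn (lightCone 𝔾) w) := by
    refine ⟨huG, (image_connectedComponentIn_lightCone_eq_self_iff ha hd.le huG hw).mpr ?_⟩
    simp only [hu, pellAutomorph, of_apply, cons_val', cons_val_zero, cons_val_one, empty_val',
      cons_val_fin_one]
    nlinarith [hPV.1]
  constructor
  · intro hg
    rcases g.det_eq_one_or_neg_one with h | h
    · obtain ⟨k, hk⟩ := eq_zpow_of_mem_automorphStabilizer ha hd hprim hw hPV hu hg h
      exact ⟨k, Or.inl hk⟩
    · obtain ⟨k, hk⟩ := eq_zpow_of_mem_automorphStabilizer ha hd hprim hw hPV hu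
        (mul_mem hα hg) (by rw [Units.val_mul, det_mul, h, hαdet]; norm_num)
      exact ⟨k, Or.inr (by rw [← hk, ← mul_assoc, hα2, one_mul])⟩
  · rintro ⟨k, rfl | rfl⟩
    exacts [zpow_mem huS k, mul_mem hα (zpow_mem huS k)]

theorem transpose_mul_mul_ambiguousInvolution {w : ℤ} (h : b = a * w) :
    (!![1, w; 0, -1] : Matrix (Fin 2) (Fin 2) ℤ)ᵀ * 𝔾 * !![1, w; 0, -1] = 𝔾 := by
  subst h
  ext i j
  fin_cases i <;> fin_cases j <;> simp [mul_apply] <;> ring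

theorem ambiguousInvolution_mul_self (w : ℤ) :
    (!![1, w; 0, -1] : Matrix (Fin 2) (Fin 2) ℤ) * !![1, w; 0, -1] = 1 := by
  simp [one_fin_two]

def ambiguousInvolution (w : ℤ) : GL (Fin 2) ℤ :=
  ⟨!![1, w; 0, -1], !![1, w; 0, -1], ambiguousInvolution_mul_self w,
    ambiguousInvolution_mul_self w⟩

theorem ambiguousInvolution_mem_automorphStabilizer (ha : 0 < a) (hd : 0 ≤ b ^ 2 - 4 * a * c)
    {w : ℤ} (h : b = a * w) {v : Fin 2 → ℝ} (hv : v ∈ lightCone 𝔾) :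
    ambiguousInvolution w ∈ automorphStabilizer 𝔾 (connectedComponentIn (lightCone 𝔾) v) := by
  have hG := transpose_mul_mul_ambiguousInvolution (c := c) h
  refine ⟨hG, (image_connectedComponentIn_lightCone_eq_self_iff (g := ambiguousInvolution w) ha
    hd hG hv).mpr ?_⟩
  simpa [ambiguousInvolution] using ha

theorem even_sub_mul_of_pell {U V : ℤ} (h : U ^ 2 - (b ^ 2 - 4 * a * c) * V ^ 2 = 4) :
    Even (U - b * V) := by
  have : Even ((U - b * V) ^ 2) :=
    ⟨2 - 2 * a * c * V ^ 2 - b * V * (U - b * V), by linear_combination h⟩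
  exact (Int.even_pow.mp this).1

end BinaryForm

/-- for the special ambiguous forms `ax² + cy²` (a > 0 > c, w = 0)
and `ax² + axy + cy²` (a > 0, a > 4c, w = 1), the matrix `a' = !![1, w; 0, -1]`
is an automorph of determinant `-1` preserving each component of the light
cone; and when the form is primitive of non-square discriminant, the
orthochronous automorphs are exactly the `u^k` and `a'·u^k`. -/
theorem ambiguous_involution_is_orthochronous
    (a b c w : ℤ)
    (hcase : (b = 0 ∧ w = 0 ∧ 0 < a ∧ c < 0) ∨
             (b = a ∧ w = 1 ∧ 0 < a ∧ 4 * c < a))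
    (d : ℤ) (hd : d = b ^ 2 - 4 * a * c)
    (G : Matrix (Fin 2) (Fin 2) ℤ) (hG : G = !![2 * a, b; b, 2 * c])
    (A : Matrix (Fin 2) (Fin 2) ℤ) (hA : A = !![1, w; 0, -1])
    (lightCone : Set (Fin 2 → ℝ))
    (hlc : lightCone =
      {v : Fin 2 → ℝ | 0 < v ⬝ᵥ ((G.map (Int.cast : ℤ → ℝ)).mulVec v)}) :
    (A.det = -1 ∧ Aᵀ * G * A = G) ∧
    (∀ v ∈ lightCone,
      (A.map (Int.cast : ℤ → ℝ)).mulVec '' connectedComponentIn lightCone v =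
        connectedComponentIn lightCone v) ∧
    (Int.gcd a (Int.gcd b c) = 1 → (¬ ∃ m : ℤ, m * m = d) →
      ∀ U V : ℤ, 0 < U → 0 < V → U ^ 2 - d * V ^ 2 = 4 →
        (∀ x y : ℤ, 0 < x → 0 < y → x ^ 2 - d * y ^ 2 = 4 → U ≤ x) →
        ∀ u : Matrix.GeneralLinearGroup (Fin 2) ℤ,
          (u : Matrix (Fin 2) (Fin 2) ℤ) =
            !![(U - b * V) / 2, -c * V; a * V, (U + b * V) / 2] →
        ∀ C : Set (Fin 2 → ℝ), (∃ v ∈ lightCone, C = connectedComponentIn lightCone v) →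
        ∀ M : Matrix (Fin 2) (Fin 2) ℤ,
          ((M.det = 1 ∨ M.det = -1) ∧ Mᵀ * G * M = G ∧
              (M.map (Int.cast : ℤ → ℝ)).mulVec '' C = C) ↔
            ∃ k : ℤ,
              M = ((u ^ k : Matrix.GeneralLinearGroup (Fin 2) ℤ) :
                Matrix (Fin 2) (Fin 2) ℤ) ∨
              M = A * ((u ^ k : Matrix.GeneralLinearGroup (Fin 2) ℤ) :
                Matrix (Fin 2) (Fin 2) ℤ)) := by
  obtain ⟨ha, hd0, hbw⟩ : 0 < a ∧ 0 < b ^ 2 - 4 * a * c ∧ b = a * w := by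
    rcases hcase with ⟨rfl, rfl, ha, hc⟩ | ⟨rfl, rfl, ha, hc⟩ <;> exact ⟨ha, by nlinarith, by ring⟩
  subst hd hG hA
  obtain rfl : lightCone = Matrix.lightCone !![2 * a, b; b, 2 * c] := hlc
  have hα := fun v (hv : v ∈ Matrix.lightCone !![2 * a, b; b, 2 * c]) =>
    ambiguousInvolution_mem_automorphStabilizer ha hd0.le hbw hv
  refine ⟨⟨by simp [det_fin_two_of], transpose_mul_mul_ambiguousInvolution hbw⟩,
    fun v hv => (hα v hv).2, ?_⟩
  rintro hprim - U V hU hV hPell hmin u hu C ⟨v, hv, rfl⟩ M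
  obtain ⟨P, hP⟩ := even_sub_mul_of_pell hPell
  obtain rfl : U = 2 * P + b * V := by linarith
  have hu' : (u : Matrix (Fin 2) (Fin 2) ℤ) = pellAutomorph a b c P V := by
    rw [hu, pellAutomorph, show (2 * P + b * V - b * V) / 2 = P by omega,
      show (2 * P + b * V + b * V) / 2 = P + b * V by omega]
  have hS := fun g => mem_automorphStabilizer_iff_exists_zpow ha hd0 hprim hv
    ⟨hU, hV, hPell, hmin⟩ hu' (hα v hv) (by simp [ambiguousInvolution, det_fin_two_of])
    (Units.ext (ambiguousInvolution_mul_self w)) (g := g)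
  rw [← exists_mem_automorphStabilizer_iff]
  constructor
  · rintro ⟨g, hg, rfl⟩
    obtain ⟨k, rfl | rfl⟩ := (hS g).mp hg
    exacts [⟨k, Or.inl rfl⟩, ⟨k, Or.inr rfl⟩]
  · rintro ⟨k, rfl | rfl⟩
    exacts [⟨u ^ k, (hS _).mpr ⟨k, Or.inl rfl⟩, rfl⟩,
      ⟨_, (hS _).mpr ⟨k, Or.inr rfl⟩, rfl⟩]
end

section
/- Let q(x,y) = ax² + bxy + cy² be a primitive integral binary quadratic form with discriminant d = b² − 4ac > 0 not a perfect square, let n = 1 or n = −1, and set Q = n·!![2a, b; b, 2c]. Let (U,V) be the minimal positive solution of x² − dy² = 4 and u the corresponding automorph. Then u² induces the identity on the discriminant group of Q, i.e. the rational matrix (u² − I)·Q⁻¹ has integer entries. -/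
open Matrix

/-! Since `U² - (b² - 4ac)V² = 4` forces `U ≡ bV (mod 2)`, write `U = 2k + bV`; then
`u = !![k, -cV; aV, k + bV]` has determinant `k² + bVk + acV² = 1`, and with this relation
`u² - 1` factors over `ℤ` as `M · !![2a, b; b, 2c]` for an explicit integral `M`. As `n = ±1`,
`(u² - 1) Q⁻¹ = nM` is integral. -/

theorem Matrix.map_mul_mul_map_inv {n R K : Type*} [Fintype n] [DecidableEq n] [CommRing R]
    [Field K] (f : R →+* K) (M Q : Matrix n n R) (hQ : f Q.det ≠ 0) :
    (M * Q).map f * (Q.map f)⁻¹ = M.map f := by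
  have hunit : IsUnit (Q.map f).det := (RingHom.map_det f Q).symm ▸ hQ.isUnit
  rw [Matrix.map_mul, Matrix.mul_assoc, mul_nonsing_inv _ hunit, Matrix.mul_one]

theorem exists_eq_two_mul_add_of_sq_sub_disc_mul_sq_eq_four {a b c U V : ℤ}
    (h : U ^ 2 - (b ^ 2 - 4 * a * c) * V ^ 2 = 4) :
    ∃ k, U = 2 * k + b * V ∧ k ^ 2 + b * V * k + a * c * V ^ 2 = 1 := by
  have heven : Even ((U - b * V) * (U + b * V)) :=
    ⟨2 - 2 * a * c * V ^ 2, by linear_combination h⟩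
  -- the two factors differ by `2bV`, so both are even as soon as one is
  obtain ⟨k, hk⟩ : ∃ k, U = 2 * k + b * V := by
    rcases Int.even_mul.mp heven with ⟨r, hr⟩ | ⟨r, hr⟩
    · exact ⟨r, by omega⟩
    · exact ⟨r - b * V, by omega⟩
  refine ⟨k, hk, ?_⟩
  subst hk
  have h4 : 4 * (k ^ 2 + b * V * k + a * c * V ^ 2) = 4 * 1 := by linear_combination h
  exact mul_left_cancel₀ four_ne_zero h4

theorem automorph_sq_sub_one_eq_mul {R : Type*} [CommRing R] {a b c k V : R}
    (h : k ^ 2 + b * V * k + a * c * V ^ 2 = 1) :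
    !![k, -c * V; a * V, k + b * V] ^ 2 - 1 =
      !![-c * V ^ 2, -V * k; V * (k + b * V), -a * V ^ 2] * !![2 * a, b; b, 2 * c] := by
  rw [sq, mul_fin_two, mul_fin_two, one_fin_two, of_sub_of]
  simp only [cons_sub_cons, empty_sub_empty, EmbeddingLike.apply_eq_iff_eq, vecCons_inj, and_true]
  refine ⟨⟨?_, ?_⟩, ?_, ?_⟩
  · linear_combination h
  · ring
  · ring
  · linear_combination h

theorem sq_automorph_trivial_on_discriminant_general
    (a b c n : ℤ) (hn : n = 1 ∨ n = -1)
    (d : ℤ) (hd : d = b ^ 2 - 4 * a * c) (hdpos : 0 < d)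
    (U V : ℤ) (hUV : U ^ 2 - d * V ^ 2 = 4)
    (u : Matrix (Fin 2) (Fin 2) ℤ)
    (hu : u = !![(U - b * V) / 2, -c * V; a * V, (U + b * V) / 2])
    (Q : Matrix (Fin 2) (Fin 2) ℤ) (hQ : Q = n • !![2 * a, b; b, 2 * c]) :
    ∀ i j : Fin 2, ∃ m : ℤ,
      (((u ^ 2).map (Int.cast : ℤ → ℚ) - 1) *
        (Q.map (Int.cast : ℤ → ℚ))⁻¹) i j = (m : ℚ) := by
  subst hd
  obtain ⟨k, rfl, hdet⟩ := exists_eq_two_mul_add_of_sq_sub_disc_mul_sq_eq_four hUV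
  have hu' : u = !![k, -c * V; a * V, k + b * V] := by
    rw [hu, show (2 * k + b * V - b * V) / 2 = k by omega,
      show (2 * k + b * V + b * V) / 2 = k + b * V by omega]
  set M : Matrix (Fin 2) (Fin 2) ℤ := !![-c * V ^ 2, -V * k; V * (k + b * V), -a * V ^ 2]
  have hn2 : n * n = 1 := by rcases hn with rfl | rfl <;> norm_num
  have hfactor : u ^ 2 - 1 = (n • M) * Q := by
    rw [hu', automorph_sq_sub_one_eq_mul hdet, hQ, smul_mul_smul_comm, hn2, one_smul]
  have hQdet : Q.det ≠ 0 := by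
    rw [hQ, det_smul, det_fin_two_of, Fintype.card_fin, sq, hn2]
    linarith
  intro i j
  refine ⟨(n • M) i j, ?_⟩
  rw [← Matrix.map_one _ Int.cast_zero Int.cast_one, ← Matrix.map_sub _ Int.cast_sub, hfactor]
  have hinv := Matrix.map_mul_mul_map_inv (Int.castRingHom ℚ) (n • M) Q
    (by simpa using hQdet)
  exact congrFun (congrFun hinv i) j

/-- for `n = ±1`, the square `u²` of the fundamental automorph
induces the identity on the discriminant group of `Q = n·!![2a, b; b, 2c]`. -/
theorem sq_automorph_trivial_on_discriminant
    (a b c n : ℤ) (hn : n = 1 ∨ n = -1)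
    (hprim : Int.gcd a (Int.gcd b c) = 1)
    (d : ℤ) (hd : d = b ^ 2 - 4 * a * c) (hdpos : 0 < d)
    (hdsq : ¬ ∃ m : ℤ, m * m = d)
    (U V : ℤ) (hU : 0 < U) (hV : 0 < V) (hUV : U ^ 2 - d * V ^ 2 = 4)
    (hmin : ∀ x y : ℤ, 0 < x → 0 < y → x ^ 2 - d * y ^ 2 = 4 → U ≤ x)
    (u : Matrix (Fin 2) (Fin 2) ℤ)
    (hu : u = !![(U - b * V) / 2, -c * V; a * V, (U + b * V) / 2])
    (Q : Matrix (Fin 2) (Fin 2) ℤ) (hQ : Q = n • !![2 * a, b; b, 2 * c]) :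
    ∀ i j : Fin 2, ∃ m : ℤ,
      (((u ^ 2).map (Int.cast : ℤ → ℚ) - 1) *
        (Q.map (Int.cast : ℤ → ℚ))⁻¹) i j = (m : ℚ) :=
  sq_automorph_trivial_on_discriminant_general a b c n hn d hd hdpos U V hUV u hu Q hQ
end

section
/- Let a > 0 and c < 0 be coprime integers with a < −c and with −ac not a perfect square, let n be an integer with |n| ≥ 2, and set Q = n·!![2a, 0; 0, 2c]. Then no automorph of Q of determinant −1 induces ±id on the discriminant group: there is no matrix M ∈ GL₂(ℤ) with det M = −1, Mᵀ Q M = Q, and ε ∈ {1, −1} such that (M − εI)·Q⁻¹ has integer entries. -/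
/-! Integrality of `(M - εI)Q⁻¹` for `Q = diag(2na, 2nc)` means that the columns of `M - εI` are
divisible by `2na` and `2nc`, so `M ≡ εI (mod 2n)`. Hence `det M ≡ ε² = 1 (mod 2n)`, and
`det M = -1` forces `2n ∣ 2`, i.e. `|n| = 1`. -/

open Matrix

theorem Matrix.dvd_det_sub_pow_card_of_dvd_sub_smul_one {R ι : Type*} [CommRing R] [Fintype ι]
    [DecidableEq ι] {M : Matrix ι ι R} {k ε : R} (h : ∀ i j, k ∣ (M - ε • 1) i j) :
    k ∣ M.det - ε ^ Fintype.card ι := by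
  let π := Ideal.Quotient.mk (Ideal.span {k})
  have hM : M.map π = π ε • 1 := by
    ext i j
    rw [map_apply, Ideal.Quotient.eq.mpr (Ideal.mem_span_singleton.mpr (h i j))]
    by_cases hij : i = j <;> simp [hij, π]
  rw [← Ideal.mem_span_singleton, ← Ideal.Quotient.mk_eq_mk_iff_sub_mem, map_pow,
    RingHom.map_det, RingHom.mapMatrix_apply, hM, det_smul, det_one, mul_one]

theorem Matrix.exists_intCast_eq_mul_inv_diagonal_iff {ι : Type*} [Fintype ι] [DecidableEq ι]
    (B : Matrix ι ι ℤ) {d : ι → ℤ} (hd : ∀ j, d j ≠ 0) (i j : ι) :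
    (∃ m : ℤ, (B.map (Int.cast : ℤ → ℚ) * ((diagonal d).map (Int.cast : ℤ → ℚ))⁻¹) i j = m) ↔
      d j ∣ B i j := by
  have hd' (j : ι) : (d j : ℚ) ≠ 0 := by exact_mod_cast hd j
  have hinv : (diagonal fun j => (d j : ℚ))⁻¹ = diagonal fun j => (d j : ℚ)⁻¹ :=
    inv_eq_left_inv (by rw [diagonal_mul_diagonal, ← diagonal_one]; simp [hd'])
  rw [diagonal_map Int.cast_zero, hinv, mul_diagonal, dvd_def]
  refine exists_congr fun m => ?_
  rw [map_apply, ← div_eq_mul_inv, div_eq_iff (hd' j), mul_comm]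
  exact_mod_cast Iff.rfl

theorem diagonal_no_improper_automorph_on_discriminant_general
    (a c n : ℤ) (ha : 0 < a) (hc : c < 0)
    (hn : 2 ≤ |n|)
    (Q : Matrix (Fin 2) (Fin 2) ℤ) (hQ : Q = n • !![2 * a, 0; 0, 2 * c]) :
    ¬ ∃ (M : Matrix (Fin 2) (Fin 2) ℤ) (ε : ℤ),
      M.det = -1 ∧ Mᵀ * Q * M = Q ∧ (ε = 1 ∨ ε = -1) ∧
      ∀ i j : Fin 2, ∃ m : ℤ,
        ((M.map (Int.cast : ℤ → ℚ) - (ε : ℚ) • 1) *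
          (Q.map (Int.cast : ℤ → ℚ))⁻¹) i j = (m : ℚ) := by
  rintro ⟨M, ε, hdet, -, hε, hint⟩
  have hn0 : n ≠ 0 := by rintro rfl; simp at hn
  have hQdiag : Q = diagonal fun j => 2 * n * ![a, c] j := by
    subst hQ; ext i j; fin_cases i <;> fin_cases j <;> simp <;> ring
  have hd : ∀ j, 2 * n * ![a, c] j ≠ 0 := by
    intro j; fin_cases j <;> simp [hn0, ha.ne', hc.ne]
  have hcast : M.map (Int.cast : ℤ → ℚ) - (ε : ℚ) • 1 = (M - ε • 1).map Int.cast := by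
    ext i j
    simp only [map_apply, Matrix.sub_apply, Matrix.smul_apply, one_apply, smul_eq_mul]
    split_ifs <;> push_cast <;> rfl
  have hdvd : ∀ i j, 2 * n ∣ (M - ε • 1) i j := fun i j =>
    (dvd_mul_right _ _).trans <|
      (exists_intCast_eq_mul_inv_diagonal_iff _ hd i j).mp (hQdiag ▸ hcast ▸ hint i j)
  have h2n : 2 * n ∣ 2 * 1 := by
    have := dvd_det_sub_pow_card_of_dvd_sub_smul_one hdvd
    rcases hε with rfl | rfl <;> simpa [hdet] using this
  have hunit : IsUnit n := isUnit_of_dvd_one <| (mul_dvd_mul_iff_left two_ne_zero).mp h2n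
  rw [Int.isUnit_iff_abs_eq] at hunit
  omega

/-- for the diagonal form with `|n| ≥ 2`, no automorph of
determinant `-1` induces `±id` on the discriminant group. -/
theorem diagonal_no_improper_automorph_on_discriminant
    (a c n : ℤ) (hac : Int.gcd a c = 1) (ha : 0 < a) (hc : c < 0)
    (haltc : a < -c) (hsq : ¬ ∃ m : ℤ, m * m = -(a * c))
    (hn : 2 ≤ |n|)
    (Q : Matrix (Fin 2) (Fin 2) ℤ) (hQ : Q = n • !![2 * a, 0; 0, 2 * c]) :
    ¬ ∃ (M : Matrix (Fin 2) (Fin 2) ℤ) (ε : ℤ),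
      M.det = -1 ∧ Mᵀ * Q * M = Q ∧ (ε = 1 ∨ ε = -1) ∧
      ∀ i j : Fin 2, ∃ m : ℤ,
        ((M.map (Int.cast : ℤ → ℚ) - (ε : ℚ) • 1) *
          (Q.map (Int.cast : ℤ → ℚ))⁻¹) i j = (m : ℚ) :=
  diagonal_no_improper_automorph_on_discriminant_general a c n ha hc hn Q hQ
end

section
/- Let a > 0 and c < 0 be coprime integers with a ≠ 1, a < −c and with −ac not a perfect square, let n = 1 or n = −1, and set Q = n·!![2a, 0; 0, 2c]. Let (S,V) be the minimal positive solution of the Pell equation x² + ac·y² = 1. Then there exists an automorph M of Q with det M = −1 inducing ε·id on the discriminant group (i.e. (M − εI)·Q⁻¹ has integer entries) for some ε ∈ {1, −1} if and only if V is even and there is ε ∈ {1, −1} with S ≡ ε (mod 2a) and S ≡ −ε (mod 2c); in that case the automorph a'·u induces ε·id, where a' = !![1, 0; 0, −1] and u is the automorph corresponding to (S,V). -/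
/-!
By coprimality of `a` and `c`, an automorph of determinant `-1` of `n • diag(2a, 2c)` is the
reflection `!![p, c w; a w, -p]` attached to a solution of `p ^ 2 + a c w ^ 2 = 1`, and it acts
as `ε` on the discriminant group exactly when `w` is even, `p ≡ ε (mod 2a)` and
`p ≡ -ε (mod 2c)`. Multiplying a solution by a square changes `p` only modulo `2ac` and `w` only
by an even number, and negating it swaps `ε` and `-ε`. Every solution is `± u ^ k` for the
fundamental solution `u`, so the condition holds for some solution iff it holds for `1` or for
`u`; it fails for `1` because neither `a` nor `c` is a unit.
-/

open Matrix

theorem exists_intCast_eq_mul_inv_iff_dvd {x y : ℤ} (hy : y ≠ 0) :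
    (∃ m : ℤ, (x : ℚ) * (y : ℚ)⁻¹ = m) ↔ y ∣ x := by
  have hy' : (y : ℚ) ≠ 0 := Int.cast_ne_zero.mpr hy
  constructor
  · rintro ⟨m, hm⟩
    refine ⟨m, Int.cast_injective (α := ℚ) ?_⟩
    push_cast
    rw [← hm]
    field_simp
  · rintro ⟨m, rfl⟩
    exact ⟨m, by push_cast; field_simp⟩

section Discriminant

variable {ι : Type*} [Fintype ι] [DecidableEq ι]

def InducesScalarOnDiscriminant (Q M : Matrix ι ι ℤ) (ε : ℤ) : Prop :=
  ∀ i j, ∃ m : ℤ,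
    ((M.map (Int.cast : ℤ → ℚ) - (ε : ℚ) • 1) * (Q.map (Int.cast : ℤ → ℚ))⁻¹) i j = m

theorem inducesScalarOnDiscriminant_diagonal_iff {d : ι → ℤ} (hd : ∀ i, d i ≠ 0)
    (M : Matrix ι ι ℤ) (ε : ℤ) :
    InducesScalarOnDiscriminant (diagonal d) M ε ↔ ∀ i j, d j ∣ (M - ε • 1) i j := by
  have hinv : ((diagonal d).map (Int.cast : ℤ → ℚ))⁻¹ = diagonal fun i ↦ ((d i : ℚ))⁻¹ := by
    rw [diagonal_map Int.cast_zero]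
    refine inv_eq_left_inv ?_
    rw [diagonal_mul_diagonal, ← diagonal_one]
    exact congrArg diagonal (funext fun i ↦ inv_mul_cancel₀ (Int.cast_ne_zero.mpr (hd i)))
  have hsub : M.map (Int.cast : ℤ → ℚ) - (ε : ℚ) • 1 = (M - ε • 1).map (Int.cast : ℤ → ℚ) := by
    ext i j
    simp [Matrix.one_apply, Matrix.intCast_apply]
  simp only [InducesScalarOnDiscriminant, hinv, hsub, mul_diagonal, map_apply,
    exists_intCast_eq_mul_inv_iff_dvd (hd _)]

end Discriminant

theorem improper_automorph_diagonal_entries {R : Type*} [CommRing R] [NoZeroDivisors R]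
    {α β : R} (hα : α ≠ 0) {M : Matrix (Fin 2) (Fin 2) R} (hdet : M.det = -1)
    (hM : Mᵀ * diagonal ![α, β] * M = diagonal ![α, β]) :
    M 1 1 = -M 0 0 ∧ α * M 0 1 = β * M 1 0 := by
  rw [det_fin_two] at hdet
  have e₀₀ := congrFun₂ hM 0 0
  have e₀₁ := congrFun₂ hM 0 1
  simp [mul_apply, Fin.sum_univ_two] at e₀₀ e₀₁
  refine ⟨mul_left_cancel₀ hα ?_, ?_⟩
  · linear_combination (-M 1 1) * e₀₀ + M 1 0 * e₀₁ + (α * M 0 0) * hdet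
  · linear_combination (-M 0 1) * e₀₀ + M 0 0 * e₀₁ + (-(β * M 1 0)) * hdet

namespace Pell

namespace Solution₁

theorem isFundamental_mk {d S V : ℤ} (hd : 0 < d) (hS : 0 < S) (hV : 0 < V)
    (hSV : S ^ 2 - d * V ^ 2 = 1)
    (hmin : ∀ s v : ℤ, 0 < s → 0 < v → s ^ 2 - d * v ^ 2 = 1 → S ≤ s) :
    IsFundamental (mk S V hSV) := by
  refine ⟨?_, hV, fun {b} hb ↦ ?_⟩
  · simp only [x_mk]
    nlinarith [mul_pos hd (pow_pos hV 2)]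
  · have hy : 0 < |b.y| := abs_pos.mpr (y_ne_zero_of_one_lt_x hb)
    exact hmin b.x |b.y| (by omega) hy (by rw [sq_abs]; exact b.prop)

theorem x_mul_sq_modEq {d : ℤ} (x y : Solution₁ d) : (x * y ^ 2).x ≡ x.x [ZMOD 2 * d] := by
  refine Int.modEq_iff_dvd.mpr ⟨-(x.x * y.y ^ 2 + x.y * y.x * y.y), ?_⟩
  simp only [sq, x_mul, y_mul]
  linear_combination (-x.x) * y.prop

theorem y_mul_sq_modEq {d : ℤ} (x y : Solution₁ d) : (x * y ^ 2).y ≡ x.y [ZMOD 2] := by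
  refine Int.modEq_iff_dvd.mpr ⟨-(x.x * y.x * y.y + x.y * d * y.y ^ 2), ?_⟩
  simp only [sq, x_mul, y_mul]
  linear_combination (-x.y) * y.prop

def InducesSign (a c ε : ℤ) (x : Solution₁ (-(a * c))) : Prop :=
  2 ∣ x.y ∧ x.x ≡ ε [ZMOD 2 * a] ∧ x.x ≡ -ε [ZMOD 2 * c]

variable {a c ε : ℤ} {x : Solution₁ (-(a * c))}

theorem InducesSign.neg (h : InducesSign a c ε x) : InducesSign a c (-ε) (-x) := by
  obtain ⟨hy, ha, hc⟩ := h
  exact ⟨by simpa using hy, by simpa using ha.neg, by simpa using hc.neg⟩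

theorem InducesSign.mul_sq (h : InducesSign a c ε x) (y : Solution₁ (-(a * c))) :
    InducesSign a c ε (x * y ^ 2) := by
  obtain ⟨hy, ha, hc⟩ := h
  have hx := x_mul_sq_modEq x y
  exact ⟨Int.modEq_zero_iff_dvd.mp ((y_mul_sq_modEq x y).trans (Int.modEq_zero_iff_dvd.mpr hy)),
    (hx.of_dvd ⟨-c, by ring⟩).trans ha, (hx.of_dvd ⟨-a, by ring⟩).trans hc⟩

theorem isUnit_of_one_modEq_neg_one {a : ℤ} (h : 1 ≡ -1 [ZMOD 2 * a]) : IsUnit a := by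
  obtain ⟨k, hk⟩ := Int.modEq_iff_dvd.mp h
  exact isUnit_of_dvd_one ⟨-k, by linarith⟩

theorem not_inducesSign_one (ha : ¬IsUnit a) (hc : ¬IsUnit c) (hε : ε = 1 ∨ ε = -1) :
    ¬InducesSign a c ε 1 := by
  rintro ⟨-, h₁, h₂⟩
  rcases hε with rfl | rfl
  · exact hc (isUnit_of_one_modEq_neg_one h₂)
  · exact ha (isUnit_of_one_modEq_neg_one h₁)

/-- The paper's `a' u`: `!![1, 0; 0, -1] * !![p, -c w; a w, p]` with `(p, w) = x⁻¹`. -/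
def reflection (a c : ℤ) (x : Solution₁ (-(a * c))) : Matrix (Fin 2) (Fin 2) ℤ :=
  !![x.x, c * x.y; a * x.y, -x.x]

theorem det_reflection (x : Solution₁ (-(a * c))) : (reflection a c x).det = -1 := by
  rw [reflection, det_fin_two_of]
  linear_combination -x.prop

theorem reflection_transpose_mul_diagonal_mul (k : ℤ) (x : Solution₁ (-(a * c))) :
    (reflection a c x)ᵀ * diagonal ![k * a, k * c] * reflection a c x =
      diagonal ![k * a, k * c] := by
  ext i j
  fin_cases i <;> fin_cases j <;> simp [reflection, mul_apply, Fin.sum_univ_two]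
  · linear_combination k * a * x.prop
  · ring
  · ring
  · linear_combination k * c * x.prop

theorem exists_eq_reflection {k : ℤ} (hk : k ≠ 0) (ha : a ≠ 0) (hac : IsCoprime a c)
    {M : Matrix (Fin 2) (Fin 2) ℤ} (hdet : M.det = -1)
    (hM : Mᵀ * diagonal ![k * a, k * c] * M = diagonal ![k * a, k * c]) :
    ∃ x : Solution₁ (-(a * c)), M = reflection a c x := by
  obtain ⟨hs, hqr⟩ := improper_automorph_diagonal_entries (mul_ne_zero hk ha) hdet hM
  have hqr' : a * M 0 1 = c * M 1 0 := mul_left_cancel₀ hk (by linear_combination hqr)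
  obtain ⟨w, hw⟩ : a ∣ M 1 0 := hac.dvd_of_dvd_mul_left ⟨M 0 1, by linear_combination -hqr'⟩
  have hq : M 0 1 = c * w := mul_left_cancel₀ ha (by rw [hqr', hw]; ring)
  rw [det_fin_two, hs, hq, hw] at hdet
  refine ⟨mk (M 0 0) w (by linear_combination -hdet), ?_⟩
  ext i j
  fin_cases i <;> fin_cases j <;> simp [reflection, hs, hq, hw]

theorem inducesScalarOnDiscriminant_reflection_iff {n : ℤ} (hn : IsUnit n) (ha : a ≠ 0)
    (hc : c ≠ 0) (x : Solution₁ (-(a * c))) (ε : ℤ) :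
    InducesScalarOnDiscriminant (diagonal ![2 * n * a, 2 * n * c]) (reflection a c x) ε ↔
      InducesSign a c ε x := by
  have hd : ∀ i, ![2 * n * a, 2 * n * c] i ≠ 0 := by
    have := hn.ne_zero
    intro i; fin_cases i <;> simp [*]
  have hunit : ∀ m t : ℤ, 2 * n * m ∣ t ↔ 2 * m ∣ t := fun m t ↦ by
    rw [show 2 * n * m = n * (2 * m) by ring, hn.mul_left_dvd]
  have heven : ∀ m : ℤ, m ≠ 0 → (2 * m ∣ m * x.y ↔ 2 ∣ x.y) := fun m hm ↦ by
    rw [mul_comm 2 m, mul_dvd_mul_iff_left hm]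
  rw [inducesScalarOnDiscriminant_diagonal_iff hd]
  simp [Fin.forall_fin_two, reflection, Matrix.intCast_apply, hunit, heven a ha, heven c hc,
    InducesSign, Int.modEq_comm (a := x.x), Int.modEq_iff_dvd]
  rw [← neg_add', dvd_neg]
  tauto

end Solution₁

open Solution₁

theorem IsFundamental.exists_inducesSign {a c ε : ℤ} (ha : ¬IsUnit a) (hc : ¬IsUnit c)
    {u x : Solution₁ (-(a * c))} (hu : IsFundamental u) (hε : ε = 1 ∨ ε = -1)
    (hx : InducesSign a c ε x) : ∃ ε', (ε' = 1 ∨ ε' = -1) ∧ InducesSign a c ε' u := by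
  obtain ⟨k, hk⟩ := hu.eq_zpow_or_neg_zpow x
  obtain ⟨ε₀, hε₀, hk⟩ : ∃ ε₀, (ε₀ = 1 ∨ ε₀ = -1) ∧ InducesSign a c ε₀ (u ^ k) := by
    rcases hk with rfl | rfl
    · exact ⟨ε, hε, hx⟩
    · exact ⟨-ε, by omega, by simpa using hx.neg⟩
  have hsplit : u ^ k * ((u ^ (k / 2))⁻¹) ^ 2 = u ^ (k % 2) := by
    nth_rw 1 [← Int.emod_add_mul_ediv k 2]
    group
  have hr := hk.mul_sq (u ^ (k / 2))⁻¹
  rw [hsplit] at hr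
  rcases Int.emod_two_eq k with h | h <;> rw [h] at hr
  · exact absurd (by simpa using hr) (not_inducesSign_one ha hc hε₀)
  · exact ⟨ε₀, hε₀, by simpa using hr⟩

end Pell

open Pell Pell.Solution₁

theorem diagonal_improper_automorph_on_discriminant_iff_general
    (a c n : ℤ) (hac : Int.gcd a c = 1) (ha : 0 < a) (ha1 : a ≠ 1) (hc : c < 0)
    (haltc : a < -c)
    (hn : n = 1 ∨ n = -1)
    (Q : Matrix (Fin 2) (Fin 2) ℤ) (hQ : Q = n • !![2 * a, 0; 0, 2 * c])
    (S V : ℤ) (hS : 0 < S) (hV : 0 < V) (hSV : S ^ 2 + a * c * V ^ 2 = 1)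
    (hmin : ∀ s v : ℤ, 0 < s → 0 < v → s ^ 2 + a * c * v ^ 2 = 1 → S ≤ s)
    (u : Matrix (Fin 2) (Fin 2) ℤ) (hu : u = !![S, -c * V; a * V, S])
    (A : Matrix (Fin 2) (Fin 2) ℤ) (hA : A = !![1, 0; 0, -1]) :
    ((∃ (M : Matrix (Fin 2) (Fin 2) ℤ) (ε : ℤ),
        M.det = -1 ∧ Mᵀ * Q * M = Q ∧ (ε = 1 ∨ ε = -1) ∧
        ∀ i j : Fin 2, ∃ m : ℤ,
          ((M.map (Int.cast : ℤ → ℚ) - (ε : ℚ) • 1) *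
            (Q.map (Int.cast : ℤ → ℚ))⁻¹) i j = (m : ℚ)) ↔
      (2 ∣ V ∧ ∃ ε : ℤ, (ε = 1 ∨ ε = -1) ∧
        S ≡ ε [ZMOD 2 * a] ∧ S ≡ -ε [ZMOD 2 * c])) ∧
    (∀ ε : ℤ, (ε = 1 ∨ ε = -1) → 2 ∣ V →
      S ≡ ε [ZMOD 2 * a] → S ≡ -ε [ZMOD 2 * c] →
      ∀ i j : Fin 2, ∃ m : ℤ,
        (((A * u).map (Int.cast : ℤ → ℚ) - (ε : ℚ) • 1) *
          (Q.map (Int.cast : ℤ → ℚ))⁻¹) i j = (m : ℚ)) := by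
  have hnu : IsUnit n := Int.isUnit_iff.mpr hn
  have hau : ¬IsUnit a := by rw [Int.isUnit_iff]; omega
  have hcu : ¬IsUnit c := by rw [Int.isUnit_iff]; omega
  have hQd : Q = diagonal ![2 * n * a, 2 * n * c] := by
    subst hQ; ext i j; fin_cases i <;> fin_cases j <;> simp <;> ring
  set U : Solution₁ (-(a * c)) := mk S V (by linear_combination hSV)
  have hU : IsFundamental U := isFundamental_mk (by nlinarith) hS hV _
    fun s v hs hv h ↦ hmin s v hs hv (by linear_combination h)
  have hAu : A * u = reflection a c U⁻¹ := by
    subst hA hu; ext i j; fin_cases i <;> fin_cases j <;> simp [reflection, U]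
  have hAu_induces : ∀ ε, 2 ∣ V → S ≡ ε [ZMOD 2 * a] → S ≡ -ε [ZMOD 2 * c] →
      InducesScalarOnDiscriminant Q (A * u) ε := fun ε hV2 hSa hSc ↦ by
    rw [hAu, hQd, inducesScalarOnDiscriminant_reflection_iff hnu ha.ne' hc.ne]
    simpa [InducesSign, U] using ⟨hV2, hSa, hSc⟩
  refine ⟨⟨?_, ?_⟩, fun ε _ ↦ hAu_induces ε⟩
  · rintro ⟨M, ε, hdet, hM, hε, hMε⟩
    replace hMε : InducesScalarOnDiscriminant Q M ε := hMε
    rw [hQd] at hM hMε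
    obtain ⟨x, rfl⟩ := exists_eq_reflection (k := 2 * n) (by simp [hnu.ne_zero]) ha.ne'
      (Int.isCoprime_iff_gcd_eq_one.mpr hac) hdet hM
    rw [inducesScalarOnDiscriminant_reflection_iff hnu ha.ne' hc.ne] at hMε
    obtain ⟨ε', hε', hVeven, hSa, hSc⟩ := hU.exists_inducesSign hau hcu hε hMε
    exact ⟨hVeven, ε', hε', hSa, hSc⟩
  · rintro ⟨hV2, ε, hε, hSa, hSc⟩
    exact ⟨A * u, ε, by rw [hAu]; exact det_reflection _,
      by rw [hAu, hQd]; exact reflection_transpose_mul_diagonal_mul _ _, hε,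
      hAu_induces ε hV2 hSa hSc⟩

/-- for the diagonal form with `n = ±1` and `a ≠ 1`, an automorph
of determinant `-1` inducing `±id` on the discriminant group exists iff `V` is
even and `S ≡ ±1 (mod 2a)`, `S ≡ ∓1 (mod 2c)`; and then `a'·u` induces it. -/
theorem diagonal_improper_automorph_on_discriminant_iff
    (a c n : ℤ) (hac : Int.gcd a c = 1) (ha : 0 < a) (ha1 : a ≠ 1) (hc : c < 0)
    (haltc : a < -c) (hsq : ¬ ∃ m : ℤ, m * m = -(a * c))
    (hn : n = 1 ∨ n = -1)
    (Q : Matrix (Fin 2) (Fin 2) ℤ) (hQ : Q = n • !![2 * a, 0; 0, 2 * c])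
    (S V : ℤ) (hS : 0 < S) (hV : 0 < V) (hSV : S ^ 2 + a * c * V ^ 2 = 1)
    (hmin : ∀ s v : ℤ, 0 < s → 0 < v → s ^ 2 + a * c * v ^ 2 = 1 → S ≤ s)
    (u : Matrix (Fin 2) (Fin 2) ℤ) (hu : u = !![S, -c * V; a * V, S])
    (A : Matrix (Fin 2) (Fin 2) ℤ) (hA : A = !![1, 0; 0, -1]) :
    ((∃ (M : Matrix (Fin 2) (Fin 2) ℤ) (ε : ℤ),
        M.det = -1 ∧ Mᵀ * Q * M = Q ∧ (ε = 1 ∨ ε = -1) ∧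
        ∀ i j : Fin 2, ∃ m : ℤ,
          ((M.map (Int.cast : ℤ → ℚ) - (ε : ℚ) • 1) *
            (Q.map (Int.cast : ℤ → ℚ))⁻¹) i j = (m : ℚ)) ↔
      (2 ∣ V ∧ ∃ ε : ℤ, (ε = 1 ∨ ε = -1) ∧
        S ≡ ε [ZMOD 2 * a] ∧ S ≡ -ε [ZMOD 2 * c])) ∧
    (∀ ε : ℤ, (ε = 1 ∨ ε = -1) → 2 ∣ V →
      S ≡ ε [ZMOD 2 * a] → S ≡ -ε [ZMOD 2 * c] →
      ∀ i j : Fin 2, ∃ m : ℤ,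
        (((A * u).map (Int.cast : ℤ → ℚ) - (ε : ℚ) • 1) *
          (Q.map (Int.cast : ℤ → ℚ))⁻¹) i j = (m : ℚ)) :=
  diagonal_improper_automorph_on_discriminant_iff_general a c n hac ha ha1 hc haltc hn Q hQ S V hS
    hV hSV hmin u hu A hA
end

section
/- Let d > 0 be an integer that is not a perfect square and let (U,V) be the minimal positive solution of the Pell equation x² − dy² = 4. Then every integer solution (u,v) of u² − dv² = 4 satisfies (u + v·√d)/2 = ε·((U + V·√d)/2)^k for some k ∈ ℤ and some ε ∈ {1, −1}. -/
/-!
The numbers `(u + v√d)/2` with `u² - dv² = 4` form a multiplicative group of nonzero reals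
(closure under products is a parity check modulo 2), and every member `β > 1` has `u, v > 0`,
so `α = (U + V√d)/2` is its least member above `1`. Given `β > 0`, pick `k` with
`α^k ≤ β < α^(k+1)`: then `β / α^k` is a member of `[1, α)`, hence equals `1`.
-/

theorem Int.two_dvd_of_sq_sub_mul_sq_eq_four {d u₁ v₁ u₂ v₂ : ℤ}
    (h₁ : u₁ ^ 2 - d * v₁ ^ 2 = 4) (h₂ : u₂ ^ 2 - d * v₂ ^ 2 = 4) :
    2 ∣ u₁ * u₂ + d * v₁ * v₂ ∧ 2 ∣ u₁ * v₂ + u₂ * v₁ := by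
  have mod_two : ∀ d u₁ v₁ u₂ v₂ : ZMod 2, u₁ ^ 2 - d * v₁ ^ 2 = 0 → u₂ ^ 2 - d * v₂ ^ 2 = 0 →
      u₁ * u₂ + d * v₁ * v₂ = 0 ∧ u₁ * v₂ + u₂ * v₁ = 0 := by
    decide
  have h₁' := congrArg (Int.cast : ℤ → ZMod 2) h₁
  have h₂' := congrArg (Int.cast : ℤ → ZMod 2) h₂
  push_cast at h₁' h₂'
  obtain ⟨h₃, h₄⟩ := mod_two _ _ _ _ _ (h₁'.trans (by decide)) (h₂'.trans (by decide))
  exact ⟨(ZMod.intCast_zmod_eq_zero_iff_dvd _ 2).1 (by push_cast; exact h₃),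
    (ZMod.intCast_zmod_eq_zero_iff_dvd _ 2).1 (by push_cast; exact h₄)⟩

def IsPellFour (d : ℤ) (β : ℝ) : Prop :=
  ∃ u v : ℤ, u ^ 2 - d * v ^ 2 = 4 ∧ β = (u + v * √d) / 2

namespace IsPellFour

variable {d : ℤ} {β γ : ℝ}

theorem mul_conj (hd : 0 ≤ d) {u v : ℤ} (h : u ^ 2 - d * v ^ 2 = 4) :
    (u + v * √d) / 2 * ((u - v * √d) / 2) = 1 := by
  have hsq : √(d : ℝ) * √d = d := Real.mul_self_sqrt (by exact_mod_cast hd)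
  have h' : (u : ℝ) ^ 2 - d * v ^ 2 = 4 := by exact_mod_cast h
  linear_combination h' / 4 - (v : ℝ) ^ 2 / 4 * hsq

theorem inv_eq_conj (hd : 0 ≤ d) {u v : ℤ} (h : u ^ 2 - d * v ^ 2 = 4) :
    ((u + v * √d) / 2 : ℝ)⁻¹ = (u - v * √d) / 2 :=
  (eq_inv_of_mul_eq_one_right (mul_conj hd h)).symm

theorem one : IsPellFour d 1 :=
  ⟨2, 0, by ring, by norm_num⟩

theorem neg (hβ : IsPellFour d β) : IsPellFour d (-β) := by
  obtain ⟨u, v, h, rfl⟩ := hβ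
  exact ⟨-u, -v, by linear_combination h, by push_cast; ring⟩

theorem inv (hd : 0 ≤ d) (hβ : IsPellFour d β) : IsPellFour d β⁻¹ := by
  obtain ⟨u, v, h, rfl⟩ := hβ
  exact ⟨u, -v, by linear_combination h, by rw [inv_eq_conj hd h]; push_cast; ring⟩

theorem mul (hd : 0 ≤ d) (hβ : IsPellFour d β) (hγ : IsPellFour d γ) :
    IsPellFour d (β * γ) := by
  obtain ⟨u₁, v₁, h₁, rfl⟩ := hβ
  obtain ⟨u₂, v₂, h₂, rfl⟩ := hγ
  obtain ⟨⟨x, hx⟩, ⟨y, hy⟩⟩ := Int.two_dvd_of_sq_sub_mul_sq_eq_four h₁ h₂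
  have hsq : √(d : ℝ) * √d = d := Real.mul_self_sqrt (by exact_mod_cast hd)
  have hx' : (u₁ * u₂ + d * v₁ * v₂ : ℝ) = 2 * x := by exact_mod_cast hx
  have hy' : (u₁ * v₂ + u₂ * v₁ : ℝ) = 2 * y := by exact_mod_cast hy
  -- Brahmagupta's identity for the numerators `2x`, `2y`.
  have h16 : (u₁ * u₂ + d * v₁ * v₂) ^ 2 - d * (u₁ * v₂ + u₂ * v₁) ^ 2 = 16 := by
    linear_combination (u₂ ^ 2 - d * v₂ ^ 2) * h₁ + 4 * h₂
  refine ⟨x, y, ?_, ?_⟩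
  · rw [hx, hy] at h16
    linarith
  · linear_combination (hx' + √d * hy' + v₁ * v₂ * hsq) / 4

theorem pow (hd : 0 ≤ d) (hβ : IsPellFour d β) (n : ℕ) : IsPellFour d (β ^ n) := by
  induction n with
  | zero => simpa using one
  | succ n ih => simpa [pow_succ] using ih.mul hd hβ

theorem zpow (hd : 0 ≤ d) (hβ : IsPellFour d β) (k : ℤ) : IsPellFour d (β ^ k) := by
  cases k with
  | ofNat n => simpa using hβ.pow hd n
  | negSucc n => simpa [zpow_negSucc] using (hβ.pow hd (n + 1)).inv hd

theorem ne_zero (hd : 0 ≤ d) (hβ : IsPellFour d β) : β ≠ 0 := by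
  obtain ⟨u, v, h, rfl⟩ := hβ
  exact left_ne_zero_of_mul_eq_one (mul_conj hd h)

/-- `u = β + β⁻¹` and `v √d = β - β⁻¹` are positive once `β > 1`. -/
theorem exists_pos_of_one_lt (hd : 0 < d) (hβ : IsPellFour d β) (hβ1 : 1 < β) :
    ∃ u v : ℤ, 0 < u ∧ 0 < v ∧ u ^ 2 - d * v ^ 2 = 4 ∧ β = (u + v * √d) / 2 := by
  obtain ⟨u, v, h, rfl⟩ := hβ
  have hconj := inv_eq_conj hd.le h
  have hinv : ((u + v * √d) / 2 : ℝ)⁻¹ < 1 := inv_lt_one_of_one_lt₀ hβ1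
  have hinv_pos : 0 < ((u + v * √d) / 2 : ℝ)⁻¹ := inv_pos.2 (by linarith)
  have hsqrt : 0 < √(d : ℝ) := Real.sqrt_pos.2 (by exact_mod_cast hd)
  have hu : (0 : ℝ) < u := by linarith
  have hv : (0 : ℝ) < v := pos_of_mul_pos_left (by linarith : (0 : ℝ) < v * √d) hsqrt.le
  exact ⟨u, v, by exact_mod_cast hu, by exact_mod_cast hv, h, rfl⟩

end IsPellFour

section Fundamental

variable {d U V : ℤ} (hd : 0 < d) (hU : 0 < U) (hV : 0 < V) (hUV : U ^ 2 - d * V ^ 2 = 4)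
  (hmin : ∀ x y : ℤ, 0 < x → 0 < y → x ^ 2 - d * y ^ 2 = 4 → U ≤ x)
include hd hU hV hUV

theorem one_lt_fundamental : 1 < ((U + V * √d) / 2 : ℝ) := by
  have hsqrt : 0 < √(d : ℝ) := Real.sqrt_pos.2 (by exact_mod_cast hd)
  have hpos : (0 : ℝ) < (U + V * √d) / 2 := by positivity
  have hVs : (0 : ℝ) < V * √d := by positivity
  have hprod := IsPellFour.mul_conj hd.le hUV
  nlinarith

include hmin

theorem fundamental_le (hβ : IsPellFour d β) (hβ1 : 1 < β) :
    ((U + V * √d) / 2 : ℝ) ≤ β := by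
  obtain ⟨u, v, hu, hv, h, rfl⟩ := hβ.exists_pos_of_one_lt hd hβ1
  have hUu : U ≤ u := hmin u v hu hv h
  have hVv : V ≤ v := by
    have : d * V ^ 2 ≤ d * v ^ 2 := by nlinarith
    nlinarith [le_of_mul_le_mul_left this hd]
  gcongr

theorem eq_fundamental_zpow_of_pos (hβ : IsPellFour d β) (hβ0 : 0 < β) :
    ∃ k : ℤ, β = ((U + V * √d) / 2 : ℝ) ^ k := by
  set α : ℝ := (U + V * √d) / 2
  have hα : IsPellFour d α := ⟨U, V, hUV, rfl⟩
  have hα1 : 1 < α := one_lt_fundamental hd hU hV hUV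
  obtain ⟨k, hk_le, hk_lt⟩ := exists_mem_Ico_zpow hβ0 hα1
  have hα0 : 0 < α := by linarith
  have hαk : 0 < α ^ k := zpow_pos hα0 k
  have hγ : IsPellFour d (β * (α ^ k)⁻¹) := hβ.mul hd.le ((hα.zpow hd.le k).inv hd.le)
  have hγ1 : 1 ≤ β * (α ^ k)⁻¹ := by rwa [← div_eq_mul_inv, one_le_div hαk]
  have hγα : β * (α ^ k)⁻¹ < α := by
    rwa [← div_eq_mul_inv, div_lt_iff₀ hαk, mul_comm, ← zpow_add_one₀ hα0.ne']
  have hγ_eq : β * (α ^ k)⁻¹ = 1 := by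
    by_contra hne
    exact hγα.not_ge (fundamental_le hd hU hV hUV hmin hγ (lt_of_le_of_ne hγ1 (Ne.symm hne)))
  exact ⟨k, by field_simp at hγ_eq; exact hγ_eq⟩

end Fundamental

theorem pell_solutions_are_powers_of_fundamental_general
    (d U V : ℤ) (hd : 0 < d)
    (hU : 0 < U) (hV : 0 < V) (hUV : U ^ 2 - d * V ^ 2 = 4)
    (hmin : ∀ x y : ℤ, 0 < x → 0 < y → x ^ 2 - d * y ^ 2 = 4 → U ≤ x) :
    ∀ u v : ℤ, u ^ 2 - d * v ^ 2 = 4 →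
      ∃ (k : ℤ) (ε : ℝ), (ε = 1 ∨ ε = -1) ∧
        ((u : ℝ) + (v : ℝ) * Real.sqrt (d : ℝ)) / 2 =
          ε * ((((U : ℝ) + (V : ℝ) * Real.sqrt (d : ℝ)) / 2) ^ k) := by
  intro u v h
  have hβ : IsPellFour d ((u + v * √d) / 2) := ⟨u, v, h, rfl⟩
  rcases (hβ.ne_zero hd.le).lt_or_gt with hneg | hpos
  · obtain ⟨k, hk⟩ := eq_fundamental_zpow_of_pos hd hU hV hUV hmin hβ.neg (neg_pos.2 hneg)
    exact ⟨k, -1, Or.inr rfl, by linarith⟩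
  · obtain ⟨k, hk⟩ := eq_fundamental_zpow_of_pos hd hU hV hUV hmin hβ hpos
    exact ⟨k, 1, Or.inl rfl, by rw [one_mul, hk]⟩

/-- every solution of the Pell equation `u² - dv² = 4` is, up to
sign, a power of the fundamental solution. -/
theorem pell_solutions_are_powers_of_fundamental
    (d U V : ℤ) (hd : 0 < d) (hdsq : ¬ ∃ m : ℤ, m * m = d)
    (hU : 0 < U) (hV : 0 < V) (hUV : U ^ 2 - d * V ^ 2 = 4)
    (hmin : ∀ x y : ℤ, 0 < x → 0 < y → x ^ 2 - d * y ^ 2 = 4 → U ≤ x) :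
    ∀ u v : ℤ, u ^ 2 - d * v ^ 2 = 4 →
      ∃ (k : ℤ) (ε : ℝ), (ε = 1 ∨ ε = -1) ∧
        ((u : ℝ) + (v : ℝ) * Real.sqrt (d : ℝ)) / 2 =
          ε * ((((U : ℝ) + (V : ℝ) * Real.sqrt (d : ℝ)) / 2) ^ k) :=
  pell_solutions_are_powers_of_fundamental_general d U V hd hU hV hUV hmin
end

section
/- Let a > 0 and c be coprime integers with a > 4c and with d = a(a − 4c) not a perfect square, let n be an integer with |n| ≥ 2 and (n,a) ∉ {(2,1), (−2,1)}, and set Q = n·!![2a, a; a, 2c]. Then no automorph of Q of determinant −1 induces ±id on the discriminant group: there is no M ∈ GL₂(ℤ) with det M = −1, Mᵀ Q M = Q, and ε ∈ {1, −1} such that (M − εI)·Q⁻¹ has integer entries. -/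
/-!
An improper automorph `M` of `G = !![2a, a; a, 2c]` satisfies `Mᵀ G = -G adj M`; comparing the
first row gives trace zero and `a (q - p) = c r`, so by coprimality
`M = !![p, p + c r; a r, -p]`. Since `Q⁻¹ = adj Q / det Q`, the integrality of `(M - ε) Q⁻¹`
says that `n · det G = -a · n (a - 4c)` divides every entry of `(M - ε) adj G`. Suitable
combinations of three of these entries are `(a - 4c) r` and `(a - 4c) (c r + ε)`, so `n ∣ r` and
`n ∣ c r + ε`, whence `n ∣ ε = ±1`, contradicting `|n| ≥ 2`.
-/

open Matrix

theorem Matrix.exists_intCast_mul_inv_apply_eq_iff {m : Type*} [Fintype m] [DecidableEq m]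
    (X Q : Matrix m m ℤ) (hQ : Q.det ≠ 0) (i j : m) :
    (∃ k : ℤ, (X.map (Int.cast : ℤ → ℚ) * (Q.map (Int.cast : ℤ → ℚ))⁻¹) i j = k) ↔
      Q.det ∣ (X * Q.adjugate) i j := by
  have hdet : ((Q.det : ℤ) : ℚ) = (Q.map Int.cast).det := (Int.castRingHom ℚ).map_det Q
  have hadj : Q.adjugate.map Int.cast = (Q.map (Int.cast : ℤ → ℚ)).adjugate :=
    (Int.castRingHom ℚ).map_adjugate Q
  have hQ' : (Q.det : ℚ) ≠ 0 := Int.cast_ne_zero.mpr hQ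
  have hmul : (X * Q.adjugate).map (Int.cast : ℤ → ℚ) =
      X.map Int.cast * Q.adjugate.map Int.cast :=
    Matrix.map_mul (f := Int.castRingHom ℚ)
  rw [inv_def, Ring.inverse_eq_inv', ← hdet, ← hadj, Matrix.mul_smul, Matrix.smul_apply,
    smul_eq_mul, ← hmul, map_apply]
  constructor
  · rintro ⟨k, hk⟩
    rw [inv_mul_eq_iff_eq_mul₀ hQ'] at hk
    exact ⟨k, by exact_mod_cast hk⟩
  · rintro ⟨k, hk⟩
    exact ⟨k, by rw [hk, Int.cast_mul, inv_mul_cancel_left₀ hQ']⟩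

theorem Matrix.exists_intCast_mul_inv_smul_apply_eq_iff (X G : Matrix (Fin 2) (Fin 2) ℤ) {n : ℤ}
    (hn : n ≠ 0) (hG : G.det ≠ 0) (i j : Fin 2) :
    (∃ k : ℤ, (X.map (Int.cast : ℤ → ℚ) * ((n • G).map (Int.cast : ℤ → ℚ))⁻¹) i j = k) ↔
      n * G.det ∣ (X * G.adjugate) i j := by
  have hdet : (n • G).det ≠ 0 := by
    rw [det_smul]
    exact mul_ne_zero (pow_ne_zero _ hn) hG
  rw [exists_intCast_mul_inv_apply_eq_iff _ _ hdet, det_smul, adjugate_smul, Matrix.mul_smul,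
    Matrix.smul_apply, Fintype.card_fin, smul_eq_mul, pow_one, sq, mul_assoc,
    mul_dvd_mul_iff_left hn]

theorem Matrix.transpose_mul_eq_neg_mul_adjugate {m R : Type*} [Fintype m] [DecidableEq m]
    [CommRing R] {G M : Matrix m m R} (hM : Mᵀ * G * M = G) (hdet : M.det = -1) :
    Mᵀ * G = -(G * M.adjugate) := by
  have h : Mᵀ * G * M * M.adjugate = G * M.adjugate := by rw [hM]
  rw [Matrix.mul_assoc _ M, mul_adjugate, hdet] at h
  simpa using congr_arg Neg.neg h

abbrev formGram (a c : ℤ) : Matrix (Fin 2) (Fin 2) ℤ := !![2 * a, a; a, 2 * c]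

theorem exists_eq_of_improper_automorph_formGram {a c : ℤ} (ha : a ≠ 0) (hac : IsCoprime a c)
    {M : Matrix (Fin 2) (Fin 2) ℤ} (hdet : M.det = -1)
    (hM : Mᵀ * formGram a c * M = formGram a c) :
    ∃ p r, M = !![p, p + c * r; a * r, -p] := by
  obtain ⟨p, q, r, s, rfl⟩ : ∃ p q r s, M = !![p, q; r, s] :=
    ⟨M 0 0, M 0 1, M 1 0, M 1 1, eta_fin_two M⟩
  have h := transpose_mul_eq_neg_mul_adjugate hM hdet
  rw [adjugate_fin_two_of] at h
  have h00 : p * (2 * a) + r * a = a * r + -(2 * a * s) := by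
    simpa [Matrix.mul_apply, Fin.sum_univ_two] using congr_fun₂ h 0 0
  have h01 : p * a + r * (2 * c) = -(a * p) + 2 * a * q := by
    simpa [Matrix.mul_apply, Fin.sum_univ_two] using congr_fun₂ h 0 1
  have hs : s = -p := by
    refine mul_left_cancel₀ (mul_ne_zero two_ne_zero ha) ?_
    linear_combination h00
  have hq : a * (q - p) = c * r := by
    refine mul_left_cancel₀ (two_ne_zero (α := ℤ)) ?_
    linear_combination -h01
  obtain ⟨k, rfl⟩ : a ∣ r := hac.dvd_of_dvd_mul_left ⟨q - p, hq.symm⟩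
  refine ⟨p, k, ?_⟩
  have : q = p + c * k := mul_left_cancel₀ ha (by linear_combination hq)
  rw [hs, this]

theorem dvd_of_dvd_sub_smul_one_mul_adjugate {a c n p r ε : ℤ} (ha : a ≠ 0) (hc : a - 4 * c ≠ 0)
    (h : ∀ i j, n * (formGram a c).det ∣
      ((!![p, p + c * r; a * r, -p] - ε • 1) * (formGram a c).adjugate) i j) :
    n ∣ ε := by
  have hdet : n * (formGram a c).det = -(a * (n * (a - 4 * c))) := by
    rw [det_fin_two_of]; ring
  simp only [hdet, neg_dvd, one_fin_two] at h
  have h00 : a * (n * (a - 4 * c)) ∣ (p - ε) * (2 * c) + -((p + c * r) * a) := by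
    simpa [adjugate_fin_two_of, Matrix.mul_apply, Fin.sum_univ_two] using h 0 0
  have h01 : a * (n * (a - 4 * c)) ∣ -((p - ε) * a) + (p + c * r) * (2 * a) := by
    simpa [adjugate_fin_two_of, Matrix.mul_apply, Fin.sum_univ_two] using h 0 1
  have h11 : a * (n * (a - 4 * c)) ∣ -(a * r * a) + (-p - ε) * (2 * a) := by
    simpa [adjugate_fin_two_of, Matrix.mul_apply, Fin.sum_univ_two] using h 1 1
  have e00 : n * (a - 4 * c) ∣ 2 * c * (p - ε) - a * (p + c * r) :=
    (dvd_mul_left _ a).trans (h00.trans (dvd_of_eq (by ring)))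
  have e01 : n * (a - 4 * c) ∣ p + 2 * c * r + ε :=
    (mul_dvd_mul_iff_left ha).1 (h01.trans (dvd_of_eq (by ring)))
  have e11 : n * (a - 4 * c) ∣ a * r + 2 * p + 2 * ε :=
    (mul_dvd_mul_iff_left ha).1 ((dvd_neg.2 h11).trans (dvd_of_eq (by ring)))
  have hr : n ∣ r := (mul_dvd_mul_iff_right hc).1 <|
    (dvd_sub e11 (dvd_mul_of_dvd_right e01 2)).trans (dvd_of_eq (by ring))
  have hcr : n ∣ c * r + ε := (mul_dvd_mul_iff_right hc).1 <|
    (dvd_add e00 (dvd_mul_of_dvd_right e01 (a - 2 * c))).trans (dvd_of_eq (by ring))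
  exact (dvd_add_right (dvd_mul_of_dvd_right hr c)).1 hcr

theorem nondiagonal_no_improper_automorph_on_discriminant_general
    (a c n : ℤ) (hac : Int.gcd a c = 1) (ha : 0 < a) (hc : 4 * c < a)
    (hn : 2 ≤ |n|)
    (Q : Matrix (Fin 2) (Fin 2) ℤ) (hQ : Q = n • !![2 * a, a; a, 2 * c]) :
    ¬ ∃ (M : Matrix (Fin 2) (Fin 2) ℤ) (ε : ℤ),
      M.det = -1 ∧ Mᵀ * Q * M = Q ∧ (ε = 1 ∨ ε = -1) ∧
      ∀ i j : Fin 2, ∃ m : ℤ,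
        ((M.map (Int.cast : ℤ → ℚ) - (ε : ℚ) • 1) *
          (Q.map (Int.cast : ℤ → ℚ))⁻¹) i j = (m : ℚ) := by
  subst hQ
  rintro ⟨M, ε, hdet, hauto, hε, hint⟩
  have hn0 : n ≠ 0 := by rintro rfl; simp at hn
  have hD : a - 4 * c ≠ 0 := by omega
  have hG : Mᵀ * formGram a c * M = formGram a c :=
    smul_right_injective _ hn0 (by simpa only [Matrix.mul_smul, Matrix.smul_mul] using hauto)
  obtain ⟨p, r, rfl⟩ :=
    exists_eq_of_improper_automorph_formGram ha.ne' (Int.isCoprime_iff_gcd_eq_one.2 hac) hdet hG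
  have hGdet : (formGram a c).det ≠ 0 := by
    rw [det_fin_two_of]
    exact fun h => mul_ne_zero ha.ne' hD (by linear_combination -h)
  have hdvd : ∀ i j, n * (formGram a c).det ∣
      ((!![p, p + c * r; a * r, -p] - ε • 1) * (formGram a c).adjugate) i j := fun i j => by
    rw [← exists_intCast_mul_inv_smul_apply_eq_iff _ _ hn0 hGdet, Matrix.map_sub _ Int.cast_sub,
      Matrix.map_smul' _ _ _ Int.cast_mul, Matrix.map_one _ Int.cast_zero Int.cast_one]
    exact hint i j
  have hnε : n ∣ ε := dvd_of_dvd_sub_smul_one_mul_adjugate ha.ne' hD hdvd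
  have hε1 : |ε| = 1 := by rcases hε with rfl | rfl <;> rfl
  have := Int.le_of_dvd (hε1 ▸ one_pos) ((abs_dvd_abs _ _).2 hnε)
  omega

/-- for the non-diagonal ambiguous form with `|n| ≥ 2` and
`(n,a) ∉ {(2,1), (-2,1)}`, no automorph of determinant `-1` induces `±id` on
the discriminant group. -/
theorem nondiagonal_no_improper_automorph_on_discriminant
    (a c n : ℤ) (hac : Int.gcd a c = 1) (ha : 0 < a) (hc : 4 * c < a)
    (hsq : ¬ ∃ m : ℤ, m * m = a * (a - 4 * c))
    (hn : 2 ≤ |n|) (hn2 : ¬ (n = 2 ∧ a = 1)) (hn2' : ¬ (n = -2 ∧ a = 1))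
    (Q : Matrix (Fin 2) (Fin 2) ℤ) (hQ : Q = n • !![2 * a, a; a, 2 * c]) :
    ¬ ∃ (M : Matrix (Fin 2) (Fin 2) ℤ) (ε : ℤ),
      M.det = -1 ∧ Mᵀ * Q * M = Q ∧ (ε = 1 ∨ ε = -1) ∧
      ∀ i j : Fin 2, ∃ m : ℤ,
        ((M.map (Int.cast : ℤ → ℚ) - (ε : ℚ) • 1) *
          (Q.map (Int.cast : ℤ → ℚ))⁻¹) i j = (m : ℚ) :=
  nondiagonal_no_improper_automorph_on_discriminant_general a c n hac ha hc hn Q hQ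
end

section
/- Let d > 0 be an integer that is not a perfect square and let (U,V) be the minimal positive solution of x² − dy² = 4. (i) If d ≡ 0 (mod 4), then every integer solution (x,y) of −x² + (d/4)·y² = −1 is of the form ±(m·(−1, 0) + n·(U/2, V)) for some integers m, n ≥ 0. (ii) If d ≡ 1 (mod 4), then every integer solution (x,y) of −x² − xy + ((d−1)/4)·y² = −1 is of the form ±(m·(−1, 0) + n·((U−V)/2, V)) for some integers m, n ≥ 0. -/
lemma two_dvd_aux (s t : ℤ) (h1 : 2 ∣ s - t) (h2 : 2 ∣ s * t) : 2 ∣ s := by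
  obtain ⟨a, ha⟩ := h1
  obtain ⟨b, hb⟩ := h2
  have hev : Even (s * t) := ⟨b, by linarith⟩
  rcases Int.even_mul.mp hev with ⟨c, hc⟩ | ⟨c, hc⟩
  · exact ⟨c, by omega⟩
  · exact ⟨c + a, by omega⟩

lemma le_of_sq_le' (A B : ℤ) (hA : 0 ≤ A) (hB : 0 < B) (h : A ^ 2 ≤ B ^ 2) : A ≤ B := by
  nlinarith [sq_nonneg (A - B), sq_nonneg (A + B)]

lemma lt_of_sq_lt' (A B : ℤ) (hA : 0 ≤ A) (hB : 0 < B) (h : A ^ 2 < B ^ 2) : A < B := by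
  nlinarith [sq_nonneg (A - B), sq_nonneg (A + B)]

set_option maxHeartbeats 1000000 in
/-- Key descent lemma: every positive solution of `X² - d·y² = 4` has `V ∣ y`. -/
lemma keyA (d U V : ℤ) (hd : 0 < d) (hU : 0 < U) (hV : 0 < V)
    (hUV : U ^ 2 - d * V ^ 2 = 4)
    (hmin : ∀ x y : ℤ, 0 < x → 0 < y → x ^ 2 - d * y ^ 2 = 4 → U ≤ x) :
    ∀ n : ℕ, ∀ X : ℤ, 0 < X → X ^ 2 - d * (n : ℤ) ^ 2 = 4 → V ∣ (n : ℤ) := by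
  intro n
  induction n using Nat.strong_induction_on with
  | _ n ih =>
    intro X hX hXn
    rcases Nat.eq_zero_or_pos n with h0 | hpos
    · simp [h0]
    set y : ℤ := (n : ℤ) with hy_def
    have hy : 0 < y := by rw [hy_def]; exact_mod_cast hpos
    have hUX : U ≤ X := hmin X y hX hy hXn
    have hyV : V ≤ y := by
      have hX2 : U ^ 2 ≤ X ^ 2 := pow_le_pow_left₀ (le_of_lt hU) hUX 2
      have h1 : d * V ^ 2 ≤ d * y ^ 2 := by linarith
      have h2 : V ^ 2 ≤ y ^ 2 := le_of_mul_le_mul_left h1 hd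
      exact le_of_sq_le' V y (le_of_lt hV) hy h2
    have h2a : 2 ∣ X * U - d * y * V := by
      apply two_dvd_aux _ (X * U + d * y * V) ⟨-(d * y * V), by ring⟩
      exact ⟨8 + 2 * d * y ^ 2 + 2 * d * V ^ 2, by
        linear_combination (U ^ 2) * hXn + (d * y ^ 2 + 4) * hUV⟩
    have h2b : 2 ∣ U * y - V * X := by
      apply two_dvd_aux _ (U * y + V * X) ⟨-(V * X), by ring⟩
      exact ⟨2 * y ^ 2 - 2 * V ^ 2, by
        linear_combination (-(V ^ 2)) * hXn + y ^ 2 * hUV⟩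
    obtain ⟨a, ha⟩ := h2a
    obtain ⟨b, hb⟩ := h2b
    have hab : a ^ 2 - d * b ^ 2 = 4 := by
      have h4 : (2 * a) ^ 2 - d * (2 * b) ^ 2 = 16 := by
        rw [← ha, ← hb]
        linear_combination (U ^ 2 - d * V ^ 2) * hXn + 4 * hUV
      linarith [h4]
    -- a > 0
    have key1 : (X * U) ^ 2 - (d * y * V) ^ 2 = 16 + 4 * d * y ^ 2 + 4 * d * V ^ 2 := by
      linear_combination (U ^ 2) * hXn + (d * y ^ 2 + 4) * hUV
    have hyy : 0 < d * y ^ 2 := by positivity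
    have hVV : 0 < d * V ^ 2 := by positivity
    have ha0 : 0 < a := by
      have := lt_of_sq_lt' (d * y * V) (X * U) (by positivity) (mul_pos hX hU) (by linarith)
      linarith
    -- 0 ≤ b
    have key2 : (U * y) ^ 2 - (V * X) ^ 2 = 4 * y ^ 2 - 4 * V ^ 2 := by
      linear_combination (-(V ^ 2)) * hXn + y ^ 2 * hUV
    have hb0 : 0 ≤ b := by
      have hsq : (V * X) ^ 2 ≤ (U * y) ^ 2 := by nlinarith [key2, hyV, hV, hy]
      have := le_of_sq_le' (V * X) (U * y) (le_of_lt (mul_pos hV hX)) (mul_pos hU hy) hsq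
      linarith
    -- b < y
    have hU3 : 3 ≤ U := by nlinarith [hVV]
    have key3 : (V * X) ^ 2 - ((U - 2) * y) ^ 2 = 4 * V ^ 2 + 4 * (U - 2) * y ^ 2 := by
      linear_combination (V ^ 2) * hXn - y ^ 2 * hUV
    have hby : b < y := by
      have t2 : 0 ≤ 4 * (U - 2) * y ^ 2 :=
        mul_nonneg (mul_nonneg (by norm_num) (by linarith)) (sq_nonneg y)
      have hpos2 : 0 < 4 * V ^ 2 + 4 * (U - 2) * y ^ 2 := by positivity
      have := lt_of_sq_lt' ((U - 2) * y) (V * X)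
        (mul_nonneg (by linarith) (le_of_lt hy)) (mul_pos hV hX) (by linarith)
      linarith
    -- induction hypothesis
    have hbn : b.natAbs < n := by omega
    have hcast : ((b.natAbs : ℤ)) = b := Int.natAbs_of_nonneg hb0
    have hbdvd : V ∣ b := by
      have := ih b.natAbs hbn a ha0 (by rw [hcast]; exact hab)
      rwa [hcast] at this
    obtain ⟨k, hk⟩ := hbdvd
    have h2y : 4 * y = 2 * (a * V) + 2 * (b * U) := by
      linear_combination V * ha + U * hb + (-y) * hUV
    have hpar : 2 ∣ a + k * U := by
      apply two_dvd_aux _ (a - k * U) ⟨k * U, by ring⟩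
      exact ⟨2 - 2 * k ^ 2, by
        linear_combination hab + (-(k ^ 2)) * hUV + (d * (b + V * k)) * hk⟩
    obtain ⟨c, hc⟩ := hpar
    have hyc : 4 * y = 4 * (V * c) := by
      linear_combination h2y + 2 * U * hk + 2 * V * hc
    exact ⟨c, by linarith⟩

/-- every representation of `-1` by the special forms
`-x² + (d/4)y²` (d ≡ 0 mod 4) resp. `-x² - xy + ((d-1)/4)y²` (d ≡ 1 mod 4) is,
up to sign, a nonnegative integral combination of the two basic solutions. -/
theorem representations_of_neg_one_basic_solutions
    (d U V : ℤ) (hd : 0 < d) (hdsq : ¬ ∃ m : ℤ, m * m = d)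
    (hU : 0 < U) (hV : 0 < V) (hUV : U ^ 2 - d * V ^ 2 = 4)
    (hmin : ∀ x y : ℤ, 0 < x → 0 < y → x ^ 2 - d * y ^ 2 = 4 → U ≤ x) :
    (d % 4 = 0 →
      ∀ x y : ℤ, -x ^ 2 + (d / 4) * y ^ 2 = -1 →
        ∃ m n ε : ℤ, 0 ≤ m ∧ 0 ≤ n ∧ (ε = 1 ∨ ε = -1) ∧
          x = ε * (m * (-1) + n * (U / 2)) ∧ y = ε * (n * V)) ∧
    (d % 4 = 1 →
      ∀ x y : ℤ, -x ^ 2 - x * y + ((d - 1) / 4) * y ^ 2 = -1 →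
        ∃ m n ε : ℤ, 0 ≤ m ∧ 0 ≤ n ∧ (ε = 1 ∨ ε = -1) ∧
          x = ε * (m * (-1) + n * ((U - V) / 2)) ∧ y = ε * (n * V)) := by
  constructor
  · -- case d ≡ 0 (mod 4)
    intro h4 x y hxy
    obtain ⟨D, hD⟩ : ∃ D : ℤ, d = 4 * D := ⟨d / 4, by omega⟩
    have hDdiv : d / 4 = D := by omega
    rw [hDdiv] at hxy
    have hD0 : 0 < D := by omega
    have hUe : 2 ∣ U := by
      apply two_dvd_aux U U ⟨0, by ring⟩
      exact ⟨2 + 2 * D * V ^ 2, by linear_combination hUV + V ^ 2 * hD⟩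
    obtain ⟨u, hu⟩ := hUe
    have hudiv : U / 2 = u := by omega
    rw [hudiv]
    by_cases hy0 : y = 0
    · subst hy0
      have h1 : (x - 1) * (x + 1) = 0 := by linear_combination -hxy
      rcases mul_eq_zero.mp h1 with h | h
      · exact ⟨1, 0, -1, by norm_num, le_refl 0, Or.inr rfl, by omega, by omega⟩
      · exact ⟨1, 0, 1, by norm_num, le_refl 0, Or.inl rfl, by omega, by omega⟩
    · have hx0 : x ≠ 0 := by
        intro h
        rw [h] at hxy
        nlinarith [sq_nonneg y, hD0, sq_abs y, abs_pos.mpr hy0]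
      have hXabs : (2 * |x|) ^ 2 - d * |y| ^ 2 = 4 := by
        rw [mul_pow, sq_abs, sq_abs]
        linear_combination (-4) * hxy - y ^ 2 * hD
      have hXpos : 0 < 2 * |x| := by
        have := abs_pos.mpr hx0; linarith
      have hdvd : V ∣ |y| := by
        have hcast : ((y.natAbs : ℤ)) = |y| := (Int.abs_eq_natAbs y).symm
        have := keyA d U V hd hU hV hUV hmin y.natAbs (2 * |x|) hXpos
          (by rw [hcast]; exact hXabs)
        rwa [hcast] at this
      obtain ⟨k, hk⟩ := hdvd
      have hyabs : 0 < |y| := abs_pos.mpr hy0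
      have hk1 : 1 ≤ k := by nlinarith [hyabs, hV]
      have hsq : (k * U) ^ 2 - (2 * |x|) ^ 2 = 4 * k ^ 2 - 4 := by
        linear_combination k ^ 2 * hUV - hXabs - d * (|y| + V * k) * hk
      have hbound : 2 * |x| ≤ k * U := by
        apply le_of_sq_le' _ _ (by positivity) (mul_pos (by linarith) hU)
        nlinarith [hsq, hk1]
      have hkU : k * U = 2 * (k * u) := by linear_combination k * hu
      rcases lt_or_gt_of_ne hy0 with hneg | hpos
      · refine ⟨k * u + x, k, -1, ?_, by linarith, Or.inr rfl, by ring, ?_⟩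
        · have := neg_abs_le x; linarith
        · have := abs_of_neg hneg; linarith
      · refine ⟨k * u - x, k, 1, ?_, by linarith, Or.inl rfl, by ring, ?_⟩
        · have := le_abs_self x; linarith
        · have := abs_of_pos hpos; linarith
  · -- case d ≡ 1 (mod 4)
    intro h4 x y hxy
    obtain ⟨E, hE⟩ : ∃ E : ℤ, d = 4 * E + 1 := ⟨d / 4, by omega⟩
    have hEdiv : (d - 1) / 4 = E := by omega
    rw [hEdiv] at hxy
    have hUVe : 2 ∣ U - V := by
      apply two_dvd_aux _ (U + V) ⟨-V, by ring⟩
      exact ⟨2 + 2 * E * V ^ 2, by linear_combination hUV + V ^ 2 * hE⟩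
    obtain ⟨w, hw⟩ := hUVe
    have hwdiv : (U - V) / 2 = w := by omega
    rw [hwdiv]
    by_cases hy0 : y = 0
    · subst hy0
      have h1 : (x - 1) * (x + 1) = 0 := by linear_combination -hxy
      rcases mul_eq_zero.mp h1 with h | h
      · exact ⟨1, 0, -1, by norm_num, le_refl 0, Or.inr rfl, by omega, by omega⟩
      · exact ⟨1, 0, 1, by norm_num, le_refl 0, Or.inl rfl, by omega, by omega⟩
    · have hX2 : (2 * x + y) ^ 2 - d * y ^ 2 = 4 := by
        linear_combination (-4) * hxy - y ^ 2 * hE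
      have hX0 : 2 * x + y ≠ 0 := by
        intro h
        rw [h] at hX2
        nlinarith [sq_nonneg y, abs_pos.mpr hy0, sq_abs y, hd]
      have hXabs : |2 * x + y| ^ 2 - d * |y| ^ 2 = 4 := by
        rw [sq_abs, sq_abs]; exact hX2
      have hXpos : 0 < |2 * x + y| := abs_pos.mpr hX0
      have hdvd : V ∣ |y| := by
        have hcast : ((y.natAbs : ℤ)) = |y| := (Int.abs_eq_natAbs y).symm
        have := keyA d U V hd hU hV hUV hmin y.natAbs (|2 * x + y|) hXpos
          (by rw [hcast]; exact hXabs)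
        rwa [hcast] at this
      obtain ⟨k, hk⟩ := hdvd
      have hyabs : 0 < |y| := abs_pos.mpr hy0
      have hk1 : 1 ≤ k := by nlinarith [hyabs, hV]
      have hsq : (k * U) ^ 2 - |2 * x + y| ^ 2 = 4 * k ^ 2 - 4 := by
        linear_combination k ^ 2 * hUV - hXabs - d * (|y| + V * k) * hk
      have hbound : |2 * x + y| ≤ k * U := by
        apply le_of_sq_le' _ _ (abs_nonneg _) (mul_pos (by linarith) hU)
        nlinarith [hsq, hk1]
      have hkUV : k * U - k * V = 2 * (k * w) := by linear_combination k * hw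
      rcases lt_or_gt_of_ne hy0 with hneg | hpos
      · refine ⟨k * w + x, k, -1, ?_, by linarith, Or.inr rfl, by ring, ?_⟩
        · have h1 := neg_abs_le (2 * x + y)
          have h2 : y = -(V * k) := by have := abs_of_neg hneg; linarith
          linarith
        · have := abs_of_neg hneg; linarith
      · refine ⟨k * w - x, k, 1, ?_, by linarith, Or.inl rfl, by ring, ?_⟩
        · have h1 := le_abs_self (2 * x + y)
          have h2 : y = V * k := by have := abs_of_pos hpos; linarith
          linarith
        · have := abs_of_pos hpos; linarith
end

section
/- Let c > 0 be an integer that is not a perfect square, set d = 4c, let (U,V) be the minimal positive solution of x² − dy² = 4 (so U is even), and consider the even Gram matrix Q = !![−2, 0; 0, 2c] of the form 2(−x² + cy²) together with the automorphs u = !![U/2, −cV; −V, U/2] and a' = !![1, 0; 0, −1]. Then there exists ε ∈ {1, −1} such that a'·u induces ε·id on the discriminant group of Q (i.e. (a'u − εI)·Q⁻¹ has integer entries) if and only if the negative Pell equation x² − cy² = −1 has an integer solution; and when this holds, necessarily ε = 1. -/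
open Matrix

private lemma exists_sq' {a b z : ℤ} (ha : 0 < a) (h : IsCoprime a b)
    (heq : a * b = z ^ 2) : ∃ r : ℤ, a = r ^ 2 := by
  obtain ⟨r, hr | hr⟩ := Int.sq_of_isCoprime h heq
  · exact ⟨r, hr⟩
  · exact ⟨r, by exfalso; nlinarith [sq_nonneg r]⟩

set_option maxHeartbeats 1000000 in
/-- for `Q = !![-2, 0; 0, 2c]`, the automorph `a'·u` induces
`±id` on the discriminant group iff the negative Pell equation `x² - cy² = -1`
is solvable, and then it induces `+id`. -/
theorem involution_on_discriminant_iff_negative_pell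
    (c : ℤ) (hc : 0 < c) (hcsq : ¬ ∃ m : ℤ, m * m = c)
    (d : ℤ) (hd : d = 4 * c)
    (U V : ℤ) (hU : 0 < U) (hV : 0 < V) (hUV : U ^ 2 - d * V ^ 2 = 4)
    (hmin : ∀ x y : ℤ, 0 < x → 0 < y → x ^ 2 - d * y ^ 2 = 4 → U ≤ x)
    (Q : Matrix (Fin 2) (Fin 2) ℤ) (hQ : Q = !![-2, 0; 0, 2 * c])
    (u : Matrix (Fin 2) (Fin 2) ℤ) (hu : u = !![U / 2, -c * V; -V, U / 2])
    (A : Matrix (Fin 2) (Fin 2) ℤ) (hA : A = !![1, 0; 0, -1]) :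
    ((∃ ε : ℤ, (ε = 1 ∨ ε = -1) ∧
        ∀ i j : Fin 2, ∃ m : ℤ,
          (((A * u).map (Int.cast : ℤ → ℚ) - (ε : ℚ) • 1) *
            (Q.map (Int.cast : ℤ → ℚ))⁻¹) i j = (m : ℚ)) ↔
      ∃ x y : ℤ, x ^ 2 - c * y ^ 2 = -1) ∧
    (∀ ε : ℤ, (ε = 1 ∨ ε = -1) →
      (∀ i j : Fin 2, ∃ m : ℤ,
        (((A * u).map (Int.cast : ℤ → ℚ) - (ε : ℚ) • 1) *
          (Q.map (Int.cast : ℤ → ℚ))⁻¹) i j = (m : ℚ)) →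
      ε = 1) := by
  classical
  subst hd
  have hc2 : 2 ≤ c := by
    have h1 : c ≠ 1 := fun h => hcsq ⟨1, by omega⟩
    omega
  -- U is even
  have hUe : (2:ℤ) ∣ U := by
    have h2 : (2:ℤ) ∣ U ^ 2 := ⟨2 + 2 * c * V ^ 2, by linarith⟩
    exact Int.prime_two.dvd_of_dvd_pow h2
  obtain ⟨s, hsU⟩ := hUe
  subst hsU
  have hs0 : 0 < s := by omega
  have hPell : s ^ 2 - c * V ^ 2 = 1 := by linarith [hUV]
  have hV1 : 1 ≤ V ^ 2 := by nlinarith [hV]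
  have hcV : 2 ≤ c * V ^ 2 := by nlinarith [hV1, hc2]
  have hs2 : 2 ≤ s := by nlinarith [hPell, hcV, hs0]
  have hsmin : ∀ x y : ℤ, 0 < x → 0 < y → x ^ 2 - c * y ^ 2 = 1 → s ≤ x := by
    intro x y hx hy hxy
    have := hmin (2 * x) y (by omega) hy (by linear_combination 4 * hxy)
    omega
  have hU2 : 2 * s / 2 = s := by omega
  have hc0 : (c : ℚ) ≠ 0 := by exact_mod_cast hc.ne'
  -- the matrix computation
  have hX : ∀ ε : ℤ,
      ((A * u).map (Int.cast : ℤ → ℚ) - (ε : ℚ) • 1) *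
        (Q.map (Int.cast : ℤ → ℚ))⁻¹ =
      !![((s:ℚ) - ε) * (-1/2), -(V:ℚ)/2; -(V:ℚ)/2, (-(s:ℚ) - ε)/(2*c)] := by
    intro ε
    subst hQ hA hu
    rw [hU2]
    have h1 : ((!![(-2:ℤ),0;0,2*c]).map (Int.cast : ℤ → ℚ))⁻¹
        = !![-(1:ℚ)/2, 0; 0, 1/(2*c)] := by
      apply inv_eq_right_inv
      ext i j
      fin_cases i <;> fin_cases j <;>
        simp [Matrix.mul_apply, Fin.sum_univ_two] <;> field_simp <;> ring
    rw [h1]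
    ext i j
    fin_cases i <;> fin_cases j <;>
      simp [Matrix.mul_apply, Fin.sum_univ_two, Matrix.one_apply] <;>
        field_simp <;> ring_nf <;> simp
  -- the integrality condition, concretely
  have hiff : ∀ ε : ℤ, (ε = 1 ∨ ε = -1) →
      ((∀ i j : Fin 2, ∃ m : ℤ,
          (((A * u).map (Int.cast : ℤ → ℚ) - (ε : ℚ) • 1) *
            (Q.map (Int.cast : ℤ → ℚ))⁻¹) i j = (m : ℚ)) ↔
        ((2 ∣ V) ∧ (2 * c ∣ s + ε))) := by
    intro ε hε
    rw [hX ε]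
    constructor
    · intro h
      obtain ⟨m1, hm1⟩ := h 0 1
      obtain ⟨m2, hm2⟩ := h 1 1
      simp at hm1 hm2
      constructor
      · refine ⟨-m1, ?_⟩
        have : (V : ℚ) = ((2 * (-m1) : ℤ) : ℚ) := by push_cast; linarith
        exact_mod_cast this
      · refine ⟨-m2, ?_⟩
        have h2 : (-(s:ℚ) - ε) = m2 * (2*c) := by
          field_simp at hm2; linarith
        have : ((s + ε : ℤ) : ℚ) = ((2 * c * (-m2) : ℤ) : ℚ) := by push_cast; linarith
        exact_mod_cast this
    · rintro ⟨⟨w, hw⟩, ⟨k, hk⟩⟩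
      have hsodd : 2 ∣ s - ε := by
        have hso : ¬ (2 ∣ s) := by
          rintro ⟨t, ht⟩
          have h5 : 4 * t ^ 2 = 1 + 4 * (c * w ^ 2) := by
            rw [ht, hw] at hPell; linear_combination hPell
          have h6 : (4:ℤ) ∣ 1 := ⟨t ^ 2 - c * w ^ 2, by linarith⟩
          norm_num at h6
        omega
      obtain ⟨a, ha⟩ := hsodd
      have hwQ : (V : ℚ) = 2 * w := by exact_mod_cast hw
      have haQ : (s : ℚ) - ε = 2 * a := by
        have : ((s - ε : ℤ) : ℚ) = ((2 * a : ℤ) : ℚ) := congrArg (fun t : ℤ => (t : ℚ)) ha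
        push_cast at this; linarith
      have hkQ : (s : ℚ) + ε = 2 * c * k := by
        have : ((s + ε : ℤ) : ℚ) = ((2 * c * k : ℤ) : ℚ) := congrArg (fun t : ℤ => (t : ℚ)) hk
        push_cast at this; linarith
      intro i j
      fin_cases i <;> fin_cases j <;> simp
      · exact ⟨-a, by push_cast; linarith⟩
      · exact ⟨-w, by push_cast; linarith⟩
      · exact ⟨-w, by push_cast; linarith⟩
      · exact ⟨-k, by push_cast; field_simp; linarith⟩
  -- ε = -1 is impossible
  have case_neg : ¬ ((2 ∣ V) ∧ (2 * c ∣ s + (-1))) := by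
    rintro ⟨⟨w, hw⟩, ⟨k, hk⟩⟩
    have hw0 : 0 < w := by omega
    have hk0 : 0 < k := by
      by_contra h
      push_neg at h
      have h2 : (2 * c) * k ≤ 0 := mul_nonpos_iff.mpr (Or.inl ⟨by linarith, h⟩)
      linarith
    have hs' : s = 2 * c * k + 1 := by linarith
    have h4 : 4 * c * (k * (c * k + 1) - w ^ 2) = 0 := by
      rw [hs', hw] at hPell; linear_combination hPell
    have key : k * (c * k + 1) = w ^ 2 := by
      rcases mul_eq_zero.mp h4 with h | h
      · exfalso; omega
      · linarith
    have hcop : IsCoprime k (c * k + 1) := ⟨-c, 1, by ring⟩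
    obtain ⟨y, hy⟩ := exists_sq' hk0 hcop key
    obtain ⟨x, hx⟩ := exists_sq' (a := c * k + 1) (z := w) (by nlinarith) hcop.symm
      (by linear_combination key)
    have hyne : y ≠ 0 := by rintro rfl; simp at hy; omega
    have hy1 : 0 < |y| := abs_pos.mpr hyne
    have hx3 : 3 ≤ x ^ 2 := by nlinarith
    have hx2 : 2 ≤ |x| := by
      by_contra h
      push_neg at h
      nlinarith [abs_nonneg x, sq_abs x]
    have hle := hsmin |x| |y| (by omega) hy1
      (by rw [sq_abs, sq_abs]; linear_combination -hx + c * hy)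
    have hs3 : s = 2 * x ^ 2 - 1 := by linarith [hx]
    have h7 : 2 * |x| ^ 2 - 1 ≤ |x| := by rw [sq_abs]; linarith
    linarith [h7, hx2, sq_nonneg (|x| - 1)]
  -- ε = 1 gives a negative Pell solution
  have case_pos : ((2 ∣ V) ∧ (2 * c ∣ s + 1)) → ∃ x y : ℤ, x ^ 2 - c * y ^ 2 = -1 := by
    rintro ⟨⟨w, hw⟩, ⟨k, hk⟩⟩
    have hw0 : 0 < w := by omega
    have hk0 : 0 < k := by
      by_contra h
      push_neg at h
      have h2 : (2 * c) * k ≤ 0 := mul_nonpos_iff.mpr (Or.inl ⟨by linarith, h⟩)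
      linarith
    have hs' : s = 2 * c * k - 1 := by linarith
    have h4 : 4 * c * (k * (c * k - 1) - w ^ 2) = 0 := by
      rw [hs', hw] at hPell; linear_combination hPell
    have key : k * (c * k - 1) = w ^ 2 := by
      rcases mul_eq_zero.mp h4 with h | h
      · exfalso; omega
      · linarith
    have hcop : IsCoprime k (c * k - 1) := ⟨c, -1, by ring⟩
    obtain ⟨y, hy⟩ := exists_sq' hk0 hcop key
    obtain ⟨x, hx⟩ := exists_sq' (a := c * k - 1) (z := w) (by nlinarith) hcop.symm
      (by linear_combination key)
    exact ⟨x, y, by linear_combination -hx + c * hy⟩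
  -- negative Pell solvable implies the condition with ε = 1
  have pell_to_cond : (∃ x y : ℤ, x ^ 2 - c * y ^ 2 = -1) →
      ((2 ∣ V) ∧ (2 * c ∣ s + 1)) := by
    rintro ⟨x, y, hxy⟩
    set Pn : ℕ → Prop := fun n => ∃ x : ℤ, x ^ 2 - c * (n : ℤ) ^ 2 = -1 with hPdef
    have hPn : ∃ n, Pn n := by
      refine ⟨y.natAbs, x, ?_⟩
      rw [show ((y.natAbs : ℤ)) ^ 2 = y ^ 2 by rw [← Int.abs_eq_natAbs, sq_abs]]
      exact hxy
    obtain ⟨x₀, hx₀⟩ := Nat.find_spec hPn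
    set n₀ := Nat.find hPn with hn₀def
    set y₀ : ℤ := (n₀ : ℤ) with hy₀def
    have hn₀ne : n₀ ≠ 0 := by
      intro h
      have hy0 : y₀ = 0 := by rw [hy₀def, h]; simp
      rw [hy0] at hx₀
      nlinarith [sq_nonneg x₀]
    have hy₀pos : 0 < y₀ := by
      rw [hy₀def]; exact_mod_cast Nat.pos_of_ne_zero hn₀ne
    set X := |x₀| with hXdef
    have hX : X ^ 2 - c * y₀ ^ 2 = -1 := by rw [hXdef, sq_abs]; exact hx₀
    have hXpos : 0 < X := by
      rcases (abs_nonneg x₀).lt_or_eq with h | h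
      · exact h
      · exfalso; nlinarith [sq_abs x₀, hy₀pos, mul_pos hy₀pos hy₀pos]
    have hminy : ∀ y' : ℤ, 0 < y' → y' < y₀ → ∀ x', x' ^ 2 - c * y' ^ 2 ≠ -1 := by
      intro y' h1 h2 x' hcontra
      have hPy' : Pn y'.toNat := ⟨x', by rw [Int.toNat_of_nonneg h1.le]; exact hcontra⟩
      exact Nat.find_min hPn (by omega) hPy'
    have hle : s ≤ 2 * X ^ 2 + 1 :=
      hsmin (2 * X ^ 2 + 1) (2 * X * y₀) (by positivity) (by positivity)
        (by linear_combination 4 * X ^ 2 * hX)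
    have heq : s = 2 * X ^ 2 + 1 := by
      by_contra hne
      have hlt : s < 2 * X ^ 2 + 1 := lt_of_le_of_ne hle hne
      set x' := X * s - c * y₀ * V with hx'def
      set y' := y₀ * s - X * V with hy'def
      have hnorm : x' ^ 2 - c * y' ^ 2 = -1 := by
        rw [hx'def, hy'def]
        linear_combination (s ^ 2 - c * V ^ 2) * hX - hPell
      have hy'pos : 0 < y' := by
        have hdiff : (y₀ * s) ^ 2 - (X * V) ^ 2 = y₀ ^ 2 + V ^ 2 := by
          linear_combination y₀ ^ 2 * hPell - V ^ 2 * hX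
        have h1 : (X * V) ^ 2 < (y₀ * s) ^ 2 := by nlinarith [hdiff, sq_nonneg V, mul_pos hy₀pos hy₀pos]
        have h2 : X * V < y₀ * s := lt_of_pow_lt_pow_left₀ 2 (by positivity) h1
        rw [hy'def]; linarith
      have hy'lt : y' < y₀ := by
        have hfac : 0 < (s - 1) * (2 * c * y₀ ^ 2 - (s + 1)) := by
          apply mul_pos (by omega)
          linarith [hX, hlt]
        have hdiff2 : c * ((X * V) ^ 2 - (y₀ * (s - 1)) ^ 2)
            = (s - 1) * (2 * c * y₀ ^ 2 - (s + 1)) := by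
          linear_combination (c * V ^ 2) * hX + (1 - c * y₀ ^ 2) * hPell
        have h1 : (y₀ * (s - 1)) ^ 2 < (X * V) ^ 2 := by nlinarith [hdiff2, hfac, hc]
        have h2 : y₀ * (s - 1) < X * V := lt_of_pow_lt_pow_left₀ 2 (by positivity) h1
        have h3 : y₀ * (s - 1) = y₀ * s - y₀ := by ring
        rw [hy'def]; linarith
      exact hminy y' hy'pos hy'lt x' hnorm
    have hP2 := hPell
    rw [heq] at hP2
    have hVsq : c * (V ^ 2 - (2 * X * y₀) ^ 2) = 0 := by
      linear_combination -hP2 + 4 * X ^ 2 * hX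
    have hV2 : V ^ 2 = (2 * X * y₀) ^ 2 := by
      rcases mul_eq_zero.mp hVsq with h | h
      · exfalso; omega
      · linarith
    have hVeq : V = 2 * X * y₀ := by
      have hz : (V - 2 * X * y₀) * (V + 2 * X * y₀) = 0 := by linear_combination hV2
      rcases mul_eq_zero.mp hz with h | h
      · linarith
      · exfalso; nlinarith [mul_pos (mul_pos (by norm_num : (0:ℤ) < 2) hXpos) hy₀pos]
    exact ⟨⟨X * y₀, by linarith⟩, ⟨y₀ ^ 2, by linarith [heq, hX]⟩⟩
  refine ⟨⟨?_, ?_⟩, ?_⟩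
  · rintro ⟨ε, hε, hcond⟩
    rw [hiff ε hε] at hcond
    rcases hε with rfl | rfl
    · exact case_pos hcond
    · exact absurd hcond case_neg
  · intro hneg
    exact ⟨1, Or.inl rfl, (hiff 1 (Or.inl rfl)).mpr (pell_to_cond hneg)⟩
  · intro ε hε hcond
    rcases hε with rfl | rfl
    · rfl
    · exact absurd ((hiff (-1) (Or.inr rfl)).mp hcond) case_neg
end

section
/- Let δ be an integer with δ ≥ 3. Then (δ, 1) is the minimal positive solution of the Pell equation x² − (δ² − 4)y² = 4. Moreover, the form q_δ(x,y) = x² + δxy + y² represents −1 (equivalently, the negative Pell equation x² − (δ² − 4)y² = −4 has an integer solution) if and only if δ = 3; in particular, for every integer δ > 3 there are no integers x, y with x² + δxy + y² = −1, equivalently the even form 2x² + 2δxy + 2y² does not represent −2. -/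
lemma no_sol_aux (δ : ℤ) (hδ : 4 ≤ δ) :
    ∀ n : ℕ, ∀ a b : ℤ, a + b ≤ (n : ℤ) → 0 < a → 0 < b → b ≤ a →
      a ^ 2 + b ^ 2 + 1 = δ * a * b → False := by
  intro n
  induction n using Nat.strong_induction_on with
  | _ n ih =>
    intro a b hab ha hb hba heq
    rcases eq_or_lt_of_le hba with h | h
    · subst h; nlinarith [mul_pos ha ha]
    · set a' := δ * b - a with ha'def
      have h1 : a * a' = b ^ 2 + 1 := by ring_nf; linear_combination -heq
      have ha' : 0 < a' := by
        by_contra hc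
        push_neg at hc
        nlinarith [mul_nonpos_of_nonneg_of_nonpos ha.le hc, sq_nonneg b]
      have ha'b : a' ≤ b := by
        have h2 : a * a' ≤ a * b := by nlinarith
        exact le_of_mul_le_mul_left h2 ha
      have heq' : b ^ 2 + a' ^ 2 + 1 = δ * b * a' := by
        simp only [ha'def]; linear_combination heq
      have hn2 : (2 : ℤ) ≤ (n : ℤ) := by linarith
      have hn : 1 ≤ n := by exact_mod_cast (by linarith : (1:ℤ) ≤ (n:ℤ))
      refine ih (n - 1) (by omega) b a' ?_ hb ha' ha'b heq'
      have : ((n - 1 : ℕ) : ℤ) = (n : ℤ) - 1 := by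
        push_cast [Nat.cast_sub hn]; ring
      rw [this]; linarith

lemma no_sol (δ : ℤ) (hδ : 4 ≤ δ) :
    ¬ ∃ x y : ℤ, x ^ 2 + δ * x * y + y ^ 2 = -1 := by
  rintro ⟨x, y, h⟩
  have hxy : x * y < 0 := by nlinarith [sq_nonneg x, sq_nonneg y, sq_nonneg (x + y)]
  have hx : x ≠ 0 := by rintro rfl; simp at hxy
  have hy : y ≠ 0 := by rintro rfl; simp at hxy
  have habs : |x| * |y| = -(x * y) := by
    rw [← abs_mul, abs_of_neg hxy]
  have heq : |x| ^ 2 + |y| ^ 2 + 1 = δ * |x| * |y| := by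
    have hx2 : |x| ^ 2 = x ^ 2 := sq_abs x
    have hy2 : |y| ^ 2 = y ^ 2 := sq_abs y
    rw [hx2, hy2, mul_assoc, habs]; linarith
  have hax : 0 < |x| := abs_pos.mpr hx
  have hay : 0 < |y| := abs_pos.mpr hy
  rcases le_total |y| |x| with hle | hle
  · exact no_sol_aux δ hδ (|x| + |y|).toNat |x| |y| (by rw [Int.toNat_of_nonneg (by positivity)]) hax hay hle heq
  · exact no_sol_aux δ hδ (|x| + |y|).toNat |y| |x| (by rw [Int.toNat_of_nonneg (by positivity)]; ring_nf; omega) hay hax hle (by linarith [heq]; )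

lemma pell_to_form (δ : ℤ) (u v : ℤ) (h : u ^ 2 - (δ ^ 2 - 4) * v ^ 2 = -4) :
    ∃ x y : ℤ, x ^ 2 + δ * x * y + y ^ 2 = -1 := by
  have hprod : (u - δ * v) * (u + δ * v) = -4 * (v ^ 2 + 1) := by linear_combination h
  have heven : Even (u - δ * v) := by
    have he : Even ((u - δ * v) * (u + δ * v)) := by
      rw [hprod]; exact ⟨-2 * (v ^ 2 + 1), by ring⟩
    rcases Int.even_mul.mp he with h1 | h1
    · exact h1
    · obtain ⟨k, hk⟩ := h1
      exact ⟨k - δ * v, by omega⟩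
  obtain ⟨x, hx⟩ := heven
  have hu : u = 2 * x + δ * v := by omega
  subst hu
  refine ⟨x, v, ?_⟩
  have h4 : 4 * (x ^ 2 + δ * x * v + v ^ 2) = 4 * (-1) := by linear_combination h
  exact mul_left_cancel₀ (by norm_num) h4

/-- `(δ, 1)` is the minimal positive solution of
`x² - (δ² - 4)y² = 4`, and `x² + δxy + y²` represents `-1` iff `δ = 3`;
equivalently, the negative Pell equation is solvable iff `δ = 3`, and for
`δ > 3` the even form `2x² + 2δxy + 2y²` does not represent `-2`. -/
theorem q_delta_represents_neg_one_iff_three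
    (δ : ℤ) (hδ : 3 ≤ δ) :
    (0 < δ ∧ 0 < (1 : ℤ) ∧ δ ^ 2 - (δ ^ 2 - 4) * 1 ^ 2 = 4 ∧
      ∀ u v : ℤ, 0 < u → 0 < v → u ^ 2 - (δ ^ 2 - 4) * v ^ 2 = 4 → δ ≤ u) ∧
    ((∃ x y : ℤ, x ^ 2 + δ * x * y + y ^ 2 = -1) ↔ δ = 3) ∧
    ((∃ u v : ℤ, u ^ 2 - (δ ^ 2 - 4) * v ^ 2 = -4) ↔ δ = 3) ∧
    (3 < δ → (¬ ∃ x y : ℤ, x ^ 2 + δ * x * y + y ^ 2 = -1) ∧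
      ¬ ∃ x y : ℤ, 2 * x ^ 2 + 2 * δ * x * y + 2 * y ^ 2 = -2) := by
  have hform : (∃ x y : ℤ, x ^ 2 + δ * x * y + y ^ 2 = -1) ↔ δ = 3 := by
    constructor
    · intro h
      by_contra hne
      exact no_sol δ (by omega) h
    · rintro rfl
      exact ⟨1, -1, by ring⟩
  refine ⟨⟨by linarith, one_pos, by ring, ?_⟩, hform, ?_, ?_⟩
  · intro u v hu hv h
    have hv2 : 1 ≤ v ^ 2 := by nlinarith
    have hd : 0 ≤ δ ^ 2 - 4 := by nlinarith
    have h2 : δ ^ 2 ≤ u ^ 2 := by nlinarith [mul_le_mul_of_nonneg_left hv2 hd]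
    by_contra hc
    push_neg at hc
    nlinarith
  · constructor
    · rintro ⟨u, v, h⟩
      exact hform.mp (pell_to_form δ u v h)
    · rintro rfl
      exact ⟨1, 1, by ring⟩
  · intro h3
    have hne : ¬ ∃ x y : ℤ, x ^ 2 + δ * x * y + y ^ 2 = -1 := by
      rw [hform]; omega
    refine ⟨hne, ?_⟩
    rintro ⟨x, y, h⟩
    refine hne ⟨x, y, ?_⟩
    have h2 : 2 * (x ^ 2 + δ * x * y + y ^ 2) = 2 * (-1) := by linear_combination h
    exact mul_left_cancel₀ (by norm_num) h2
end
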